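/- arXiv:0803.2719 — 4 statements merged into one kernel-verified Lean document; each statement's English description precedes it below -/
import Mathlib

section
/- Let F and G be summable ball kernels. Suppose v, w : ℚ_p × [0, ∞) → ℂ both satisfy: there exist a ball and a γ ∈ ℤ (possibly different for v and for w) such that for every t ≥ 0 the function v(·, t) (respectively w(·, t)) vanishes outside that ball, is constant on every ball of radius p^γ, and has ∫ v(x, t) dμ(x) = 0 (respectively for w); for each x the function t ↦ v(x, t) (respectively t ↦ w(x, t)) is continuously differentiable on [0, ∞); each of v and w satisfies the quadratic cascade equation for all x ∈ ℚ_p and t > 0; and v(x, 0) = w(x, 0) for all x. Then v(x, t) = w(x, t) for all x ∈ ℚ_p and t ≥ 0. -/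
open MeasureTheory

/-- The index (base-`p` logarithm of the radius) of the smallest ball of `ℚ_[p]`
containing the two points `x` and `y` (for `x ≠ y`): its radius is `‖x - y‖ = p ^ (-(x-y).valuation)`. -/
noncomputable def supIdx {p : ℕ} [Fact p.Prime] (x y : ℚ_[p]) : ℤ := -(x - y).valuation

/-- The index of the smallest ball containing the three points `x`, `ξ`, `η`
(for pairwise distinct points): its radius is `max (‖x-ξ‖, ‖x-η‖, ‖ξ-η‖)`. -/
noncomputable def sup3Idx {p : ℕ} [Fact p.Prime] (x ξ η : ℚ_[p]) : ℤ :=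
  max (supIdx x ξ) (max (supIdx x η) (supIdx ξ η))

/-- A ball kernel: a function on balls of `ℚ_[p]`, encoded as a function of a center and
an index (log_p of the radius), independent of the choice of center in the ball. -/
def IsBallKernel {p : ℕ} [Fact p.Prime] (F : ℚ_[p] → ℤ → ℂ) : Prop :=
  ∀ c c' : ℚ_[p], ∀ γ : ℤ, dist c c' ≤ (p : ℝ) ^ γ → F c γ = F c' γ

/-- Summability of a ball kernel: for every ball `B(c, p^γ₀)`,
`Σ_{γ > γ₀} ‖F(B(c, p^γ))‖ (p^γ - p^(γ-1)) < ∞`. -/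
def KernelSummable {p : ℕ} [Fact p.Prime] (F : ℚ_[p] → ℤ → ℂ) : Prop :=
  ∀ c : ℚ_[p], ∀ γ₀ : ℤ, Summable (fun n : ℕ =>
    ‖F c (γ₀ + 1 + n)‖ * ((p : ℝ) ^ (γ₀ + 1 + (n : ℤ)) - (p : ℝ) ^ (γ₀ + (n : ℤ))))

/-- An ultrametric wavelet with ball `B(c, p^γ)`: vanishes outside the ball, is constant
on each of the `p` maximal subballs (balls of radius `p^(γ-1)`), has zero mean, and is
not identically zero. -/
def IsWavelet {p : ℕ} [Fact p.Prime] [MeasurableSpace ℚ_[p]] (μ : Measure ℚ_[p])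
    (ψ : ℚ_[p] → ℂ) (c : ℚ_[p]) (γ : ℤ) : Prop :=
  (∀ x, (p : ℝ) ^ γ < dist x c → ψ x = 0) ∧
    (∀ x y, dist x y ≤ (p : ℝ) ^ (γ - 1) → ψ x = ψ y) ∧
    (∫ x, ψ x ∂μ) = 0 ∧ ψ ≠ 0

/-- The eigenvalue `λ_I = T(I) ν(I) + Σ_{J > I} T(J) (ν(J) - ν(J,I))` attached to the ball
`I = B(c, p^γI)` and the ball kernel `T`. -/
noncomputable def lamBall {p : ℕ} [Fact p.Prime] (T : ℚ_[p] → ℤ → ℂ) (c : ℚ_[p]) (γI : ℤ) : ℂ :=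
  T c γI * (((p : ℝ) ^ γI : ℝ) : ℂ) +
    ∑' n : ℕ, T c (γI + 1 + n) *
      (((p : ℝ) ^ (γI + 1 + (n : ℤ)) - (p : ℝ) ^ (γI + (n : ℤ)) : ℝ) : ℂ)

/-- The coefficient `Φ_{I,J}` for balls `J = B(c, p^γJ) ⊊ I = B(c, p^γI)`. -/
noncomputable def PhiIJ {p : ℕ} [Fact p.Prime] (F : ℚ_[p] → ℤ → ℂ) (c : ℚ_[p])
    (γI γJ : ℤ) : ℂ :=
  (((p : ℝ) ^ (2 * (γI - 1)) : ℝ) : ℂ) * F c γI - (((p : ℝ) ^ (2 * γJ) : ℝ) : ℂ) * F c γJ -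
    ∑ γ ∈ Finset.Ioo γJ γI, (((p : ℝ) ^ (2 * γ) - (p : ℝ) ^ (2 * γ - 2) : ℝ) : ℂ) * F c γ

/-- The (spatial) operator of the quadratic cascade equation:
`∫∫ F(sup(x,ξ,η)) f(ξ)(f(η) - f(x)) dμ(ξ) dμ(η) + ∫ G(sup(x,ξ))(f(x) - f(ξ)) dμ(ξ)`. -/
noncomputable def cascadeOp {p : ℕ} [Fact p.Prime] [MeasurableSpace ℚ_[p]]
    (μ : Measure ℚ_[p]) (F G : ℚ_[p] → ℤ → ℂ) (f : ℚ_[p] → ℂ) (x : ℚ_[p]) : ℂ :=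
  (∫ ξ, ∫ η, F x (sup3Idx x ξ η) * (f ξ * (f η - f x)) ∂μ ∂μ) +
    ∫ ξ, G x (supIdx x ξ) * (f x - f ξ) ∂μ

/-- `v` satisfies the quadratic cascade equation
`∂ₜ v(x,t) + ∫∫ F(sup(x,ξ,η)) v(ξ,t)(v(η,t) - v(x,t)) dμ(ξ) dμ(η)
  + ∫ G(sup(x,ξ))(v(x,t) - v(ξ,t)) dμ(ξ) = 0` for all `x ∈ ℚ_p` and all `t > 0`. -/
def SatisfiesCascade {p : ℕ} [Fact p.Prime] [MeasurableSpace ℚ_[p]]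
    (μ : Measure ℚ_[p]) (F G : ℚ_[p] → ℤ → ℂ) (v : ℚ_[p] → ℝ → ℂ) : Prop :=
  ∀ x : ℚ_[p], ∀ t : ℝ, 0 < t →
    HasDerivAt (fun s => v x s) (-(cascadeOp μ F G (fun y => v y t) x)) t

/-!
Both solutions are, at every time, supported in one ball `B(c, p^Γ)` and constant on the balls
of radius `p^γ`, so they are determined by their values on a finite set `S` of centres. On such
functions, bounded by `M`, the cascade operator is Lipschitz for the sup norm: at the scales
that can contribute, the kernels are dominated by an integrable majorant, whose tail outside
the ball is integrable by the summability of `F` and `G`. Hence `u(t) = (v - w)(·, t)|_S`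
satisfies `‖u'‖ ≤ K ‖u‖` for `t > 0` and `u(0) = 0`, and Grönwall's inequality gives `u = 0`.
-/

open Metric Set Filter Topology

lemma continuous_of_forall_dist_le_imp_eq {X Y : Type*} [PseudoMetricSpace X] [TopologicalSpace Y]
    {f : X → Y} {r : ℝ} (hr : 0 < r) (hf : ∀ x y, dist x y ≤ r → f x = f y) : Continuous f :=
  continuous_iff_continuousAt.2 fun x => continuousAt_const.congr <|
    Filter.mem_of_superset (closedBall_mem_nhds x hr) fun y hy => hf x y (by rwa [dist_comm])

lemma norm_integral_sub_integral_le {α E : Type*} [MeasurableSpace α] [NormedAddCommGroup E]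
    [NormedSpace ℝ E] {μ : Measure α} {φ ψ : α → E} {m : α → ℝ} {A B : ℝ}
    (hm : Integrable m μ) (hφ : AEStronglyMeasurable φ μ) (hψ : AEStronglyMeasurable ψ μ)
    (hφm : ∀ a, ‖φ a‖ ≤ A * m a) (hψm : ∀ a, ‖ψ a‖ ≤ A * m a)
    (hφψ : ∀ a, ‖φ a - ψ a‖ ≤ B * m a) :
    ‖∫ a, φ a ∂μ - ∫ a, ψ a ∂μ‖ ≤ B * ∫ a, m a ∂μ := by
  rw [← integral_sub ((hm.const_mul A).mono' hφ (.of_forall hφm))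
    ((hm.const_mul A).mono' hψ (.of_forall hψm)), ← integral_const_mul]
  exact norm_integral_le_of_norm_le (hm.const_mul B) (.of_forall hφψ)

lemma eq_zero_of_norm_deriv_le_mul_norm {E : Type*} [NormedAddCommGroup E] [NormedSpace ℝ E]
    {u u' : ℝ → E} {K t : ℝ} (ht : 0 ≤ t) (hu : ContinuousOn u (Icc 0 t)) (hu₀ : u 0 = 0)
    (hderiv : ∀ s ∈ Ioo 0 t, HasDerivAt u (u' s) s)
    (hbound : ∀ s ∈ Ioo 0 t, ‖u' s‖ ≤ K * ‖u s‖) : u t = 0 := by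
  rcases ht.eq_or_lt with rfl | ht
  · exact hu₀
  -- The derivative is only known on `(0, t)`: apply Grönwall on `[s, t]` and let `s → 0`.
  have hgronwall : ∀ s ∈ Ioo 0 t, ‖u t‖ ≤ ‖u s‖ * Real.exp (K * (t - s)) := fun s hs => by
    have hsub : ∀ r ∈ Ico s t, r ∈ Ioo 0 t := fun r hr => ⟨hs.1.trans_le hr.1, hr.2⟩
    have := norm_le_gronwallBound_of_norm_deriv_right_le (K := K) (ε := 0)
      (hu.mono (Icc_subset_Icc hs.1.le le_rfl))
      (fun r hr => (hderiv r (hsub r hr)).hasDerivWithinAt) le_rfl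
      (fun r hr => by simpa using hbound r (hsub r hr)) t ⟨hs.2.le, le_rfl⟩
    rwa [gronwallBound_ε0] at this
  have hlim : Tendsto (fun s => ‖u s‖ * Real.exp (K * (t - s))) (𝓝[>] 0) (𝓝 0) := by
    have hu_lim : Tendsto u (𝓝[>] 0) (𝓝 0) := hu₀ ▸
      ((hu 0 (left_mem_Icc.2 ht.le)).mono_of_mem_nhdsWithin (Icc_mem_nhdsGT ht)).tendsto
    simpa using hu_lim.norm.mul ((Real.continuous_exp.comp (continuous_const.mul
      (continuous_const.sub continuous_id))).tendsto 0 |>.mono_left nhdsWithin_le_nhds)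
  exact norm_le_zero_iff.1 (ge_of_tendsto hlim
    (eventually_of_mem (Ioo_mem_nhdsGT ht) hgronwall))

namespace Padic

variable {p : ℕ} [hp : Fact p.Prime]

lemma one_lt_natCast_prime : (1 : ℝ) < p := by exact_mod_cast hp.out.one_lt

lemma natCast_prime_pos : (0 : ℝ) < p := zero_lt_one.trans one_lt_natCast_prime

lemma dist_eq_zpow_supIdx {x y : ℚ_[p]} (h : x ≠ y) : dist x y = (p : ℝ) ^ supIdx x y := by
  rw [dist_eq_norm, norm_eq_zpow_neg_valuation (sub_ne_zero.2 h), supIdx]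

lemma supIdx_eq_floor_logb (x y : ℚ_[p]) : supIdx x y = ⌊Real.logb p (dist x y)⌋ := by
  rcases eq_or_ne x y with rfl | h
  · simp [supIdx]
  · rw [dist_eq_zpow_supIdx h, ← Real.rpow_intCast,
      Real.logb_rpow natCast_prime_pos one_lt_natCast_prime.ne', Int.floor_intCast]

lemma supIdx_comm (x y : ℚ_[p]) : supIdx x y = supIdx y x := by
  rw [supIdx_eq_floor_logb, supIdx_eq_floor_logb, dist_comm]

lemma supIdx_le_iff {x y : ℚ_[p]} (h : x ≠ y) {γ : ℤ} :
    supIdx x y ≤ γ ↔ dist x y ≤ (p : ℝ) ^ γ := by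
  rw [dist_eq_zpow_supIdx h, zpow_le_zpow_iff_right₀ one_lt_natCast_prime]

lemma lt_supIdx_iff {x y : ℚ_[p]} (h : x ≠ y) {γ : ℤ} :
    γ < supIdx x y ↔ (p : ℝ) ^ γ < dist x y := by
  rw [dist_eq_zpow_supIdx h, zpow_lt_zpow_iff_right₀ one_lt_natCast_prime]

lemma lt_supIdx_of_zpow_lt_dist {x y : ℚ_[p]} {γ : ℤ} (h : (p : ℝ) ^ γ < dist x y) :
    γ < supIdx x y :=
  (lt_supIdx_iff (dist_pos.1 ((zpow_pos natCast_prime_pos γ).trans h))).2 h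

lemma supIdx_le_of_dist_le {x y : ℚ_[p]} {γ : ℤ} (hγ : 0 ≤ γ) (h : dist x y ≤ (p : ℝ) ^ γ) :
    supIdx x y ≤ γ := by
  rcases eq_or_ne x y with rfl | hne
  · simpa [supIdx] using hγ
  · exact (supIdx_le_iff hne).2 h

lemma supIdx_eq_of_dist_mem_Ioc {x y : ℚ_[p]} {k : ℤ}
    (h₁ : (p : ℝ) ^ k < dist x y) (h₂ : dist x y ≤ (p : ℝ) ^ (k + 1)) : supIdx x y = k + 1 := by
  have hne : x ≠ y := dist_pos.1 ((zpow_pos natCast_prime_pos k).trans h₁)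
  have := (supIdx_le_iff hne).2 h₂
  have := (lt_supIdx_iff hne).2 h₁
  omega

lemma supIdx_eq_of_dist_le_of_lt {c u η : ℚ_[p]} {r : ℝ} (hu : dist u c ≤ r) (hη : r < dist η c) :
    supIdx u η = supIdx c η := by
  have hne : dist u c ≠ dist c η := by rw [dist_comm c]; exact (hu.trans_lt hη).ne
  rw [supIdx_eq_floor_logb, supIdx_eq_floor_logb,
    IsUltrametricDist.dist_eq_max_of_dist_ne_dist _ _ _ hne,
    max_eq_right (by rw [dist_comm c]; exact (hu.trans_lt hη).le)]

lemma exists_finset_cover_closedBall (c : ℚ_[p]) (γ : ℤ) (m : ℕ) :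
    ∃ S : Finset ℚ_[p], S.card ≤ p ^ m ∧ (∀ y ∈ S, dist y c ≤ (p : ℝ) ^ (γ + m)) ∧
      ∀ z, dist z c ≤ (p : ℝ) ^ (γ + m) → ∃ y ∈ S, dist z y ≤ (p : ℝ) ^ γ := by
  classical
  have hp0 : (p : ℚ_[p]) ≠ 0 := by exact_mod_cast hp.out.ne_zero
  set rep : ℕ → ℚ_[p] := fun k => c + k * (p : ℚ_[p]) ^ (-(γ + m))
  refine ⟨(Finset.range (p ^ m)).image rep, Finset.card_image_le.trans (by simp), ?_, ?_⟩
  · simp only [Finset.mem_image, Finset.mem_range, forall_exists_index, and_imp]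
    rintro _ k - rfl
    rw [dist_eq_norm, add_sub_cancel_left, norm_mul, norm_p_zpow, neg_neg]
    exact mul_le_of_le_one_left (zpow_pos natCast_prime_pos _).le
      (by exact_mod_cast norm_int_le_one k)
  · intro z hz
    -- Rescale `z - c` into `ℤ_[p]` and approximate it modulo `p ^ m` by a natural number.
    have hnorm : ‖(z - c) * (p : ℚ_[p]) ^ (γ + m)‖ ≤ 1 := by
      rw [norm_mul, norm_p_zpow, ← dist_eq_norm, zpow_neg]
      exact mul_inv_le_one_of_le₀ hz (zpow_pos natCast_prime_pos _).le
    set a : ℤ_[p] := ⟨_, hnorm⟩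
    have ha : (a : ℚ_[p]) = (z - c) * (p : ℚ_[p]) ^ (γ + m) := rfl
    set k := a.appr m
    refine ⟨rep k, Finset.mem_image_of_mem _ (Finset.mem_range.2 (a.appr_lt m)), ?_⟩
    have happr : ‖(a : ℚ_[p]) - k‖ ≤ (p : ℝ) ^ (-(m : ℤ)) := by
      have := (PadicInt.norm_le_pow_iff_mem_span_pow _ m).2 (PadicInt.appr_spec m a)
      rwa [PadicInt.norm_def, PadicInt.coe_sub, PadicInt.coe_natCast] at this
    have key : z - rep k = ((a : ℚ_[p]) - k) * (p : ℚ_[p]) ^ (-(γ + m)) := by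
      rw [ha, sub_mul, mul_assoc, ← zpow_add₀ hp0]
      simp only [rep, add_neg_cancel, zpow_zero, mul_one]
      ring
    rw [dist_eq_norm, key, norm_mul, norm_p_zpow, neg_neg]
    calc ‖(a : ℚ_[p]) - k‖ * (p : ℝ) ^ (γ + m) ≤ (p : ℝ) ^ (-(m : ℤ)) * (p : ℝ) ^ (γ + m) := by
          gcongr
      _ = (p : ℝ) ^ γ := by rw [← zpow_add₀ natCast_prime_pos.ne']; ring_nf

lemma compl_closedBall_subset_iUnion_closedBall_diff (c : ℚ_[p]) (Γ : ℤ) :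
    (closedBall c ((p : ℝ) ^ Γ))ᶜ ⊆
      ⋃ n : ℕ, closedBall c ((p : ℝ) ^ (Γ + 1 + n)) \ closedBall c ((p : ℝ) ^ (Γ + n)) := by
  intro η hη
  rw [mem_compl_iff, mem_closedBall, not_le, dist_comm] at hη
  have hlt := lt_supIdx_of_zpow_lt_dist hη
  have hne : c ≠ η := dist_pos.1 ((zpow_pos natCast_prime_pos Γ).trans hη)
  refine mem_iUnion.2 ⟨(supIdx c η - Γ - 1).toNat, ?_, ?_⟩
  · rw [mem_closedBall, dist_comm, ← supIdx_le_iff hne]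
    omega
  · rw [mem_closedBall, not_le, dist_comm, ← lt_supIdx_iff hne]
    omega

/-- Dominates `‖k s‖` at every scale `s > γ` that separates a point of `closedBall c (p ^ Γ)`
from `η`: inside the ball these are the finitely many scales of `(γ, Γ]`, outside it the scale
is `supIdx c η`. -/
noncomputable def ballMajorant {E : Type*} [Norm E] (c : ℚ_[p]) (γ Γ : ℤ) (k : ℤ → E) :
    ℚ_[p] → ℝ :=
  open Classical in
  (closedBall c ((p : ℝ) ^ Γ)).piecewise (fun _ => ∑ j ∈ Finset.Ioc γ Γ, ‖k j‖)
    (fun η => ‖k (supIdx c η)‖)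

section Majorant

variable {E : Type*} [SeminormedAddCommGroup E] {c : ℚ_[p]} {γ Γ : ℤ} {k : ℤ → E}

lemma ballMajorant_nonneg (η : ℚ_[p]) : 0 ≤ ballMajorant c γ Γ k η := by
  unfold ballMajorant Set.piecewise
  split_ifs <;> positivity

lemma norm_le_ballMajorant {s : ℤ} {η : ℚ_[p]}
    (hin : η ∈ closedBall c ((p : ℝ) ^ Γ) → γ < s ∧ s ≤ Γ)
    (hout : η ∉ closedBall c ((p : ℝ) ^ Γ) → s = supIdx c η) :
    ‖k s‖ ≤ ballMajorant c γ Γ k η := by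
  classical
  by_cases hη : η ∈ closedBall c ((p : ℝ) ^ Γ)
  · rw [ballMajorant, Set.piecewise_eq_of_mem _ _ _ hη]
    exact Finset.single_le_sum (fun j _ => norm_nonneg (k j)) (Finset.mem_Ioc.2 (hin hη))
  · rw [ballMajorant, Set.piecewise_eq_of_notMem _ _ _ hη, hout hη]

lemma norm_apply_supIdx_le_ballMajorant (hΓ : 0 ≤ Γ) {x ξ : ℚ_[p]}
    (hx : dist x c ≤ (p : ℝ) ^ Γ) (hxξ : (p : ℝ) ^ γ < dist x ξ) :
    ‖k (supIdx x ξ)‖ ≤ ballMajorant c γ Γ k ξ := by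
  refine norm_le_ballMajorant (fun hξ => ⟨lt_supIdx_of_zpow_lt_dist hxξ,
    supIdx_le_of_dist_le hΓ ?_⟩) fun hξ => supIdx_eq_of_dist_le_of_lt hx (not_le.1 hξ)
  exact (IsUltrametricDist.dist_triangle_max x c ξ).trans
    (max_le hx (by rwa [dist_comm, ← mem_closedBall]))

lemma norm_apply_sup3Idx_le_ballMajorant (hΓ : 0 ≤ Γ) {x ξ η : ℚ_[p]}
    (hx : dist x c ≤ (p : ℝ) ^ Γ) (hξ : dist ξ c ≤ (p : ℝ) ^ Γ) (hxη : (p : ℝ) ^ γ < dist x η) :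
    ‖k (sup3Idx x ξ η)‖ ≤ ballMajorant c γ Γ k η := by
  have hin : ∀ {u v : ℚ_[p]}, dist u c ≤ (p : ℝ) ^ Γ → dist v c ≤ (p : ℝ) ^ Γ →
      supIdx u v ≤ Γ := fun hu hv => supIdx_le_of_dist_le hΓ
    ((IsUltrametricDist.dist_triangle_max _ c _).trans (max_le hu (by rwa [dist_comm])))
  refine norm_le_ballMajorant (fun hη => ⟨?_, ?_⟩) fun hη => ?_
  · exact (lt_supIdx_of_zpow_lt_dist hxη).trans_le ((le_max_left _ _).trans (le_max_right _ _))
  · exact max_le (hin hx hξ) (max_le (hin hx hη) (hin hξ hη))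
  · rw [mem_closedBall, not_le] at hη
    have hfar : Γ < supIdx c η := by
      rw [supIdx_comm]; exact lt_supIdx_of_zpow_lt_dist hη
    rw [sup3Idx, supIdx_eq_of_dist_le_of_lt hx hη, supIdx_eq_of_dist_le_of_lt hξ hη]
    have := hin hx hξ
    omega

end Majorant

def IsTestFunction {E : Type*} [Zero E] (c : ℚ_[p]) (γ Γ : ℤ) (f : ℚ_[p] → E) : Prop :=
  (∀ x, (p : ℝ) ^ Γ < dist x c → f x = 0) ∧ ∀ x y, dist x y ≤ (p : ℝ) ^ γ → f x = f y

namespace IsTestFunction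

variable {E : Type*} {c : ℚ_[p]} {γ Γ : ℤ} {f g : ℚ_[p] → E}

lemma zero [Zero E] : IsTestFunction c γ Γ (0 : ℚ_[p] → E) :=
  ⟨fun _ _ => rfl, fun _ _ _ => rfl⟩

lemma sub [AddGroup E] (hf : IsTestFunction c γ Γ f) (hg : IsTestFunction c γ Γ g) :
    IsTestFunction c γ Γ (f - g) :=
  ⟨fun x hx => by simp [hf.1 x hx, hg.1 x hx],
    fun x y hxy => by simp [hf.2 x y hxy, hg.2 x y hxy]⟩

lemma mono [Zero E] {c' : ℚ_[p]} {γ' Γ' : ℤ} (hf : IsTestFunction c γ Γ f) (hγ : γ' ≤ γ)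
    (hΓ : Γ ≤ Γ') (hc : dist c c' ≤ (p : ℝ) ^ Γ') : IsTestFunction c' γ' Γ' f := by
  have hmono := fun {a b : ℤ} (h : a ≤ b) =>
    zpow_le_zpow_right₀ (one_lt_natCast_prime (p := p)).le h
  refine ⟨fun x hx => hf.1 x ?_, fun x y hxy => hf.2 x y (hxy.trans (hmono hγ))⟩
  by_contra! h
  exact hx.not_ge ((IsUltrametricDist.dist_triangle_max x c c').trans
    (max_le (h.trans (hmono hΓ)) hc))

lemma norm_le_pi_norm [SeminormedAddGroup E] (hf : IsTestFunction c γ Γ f) {S : Finset ℚ_[p]}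
    (hS : ∀ z, dist z c ≤ (p : ℝ) ^ Γ → ∃ y ∈ S, dist z y ≤ (p : ℝ) ^ γ) (z : ℚ_[p]) :
    ‖f z‖ ≤ ‖fun y : S => f y‖ := by
  by_cases hz : dist z c ≤ (p : ℝ) ^ Γ
  · obtain ⟨y, hyS, hzy⟩ := hS z hz
    rw [hf.2 z y hzy]
    exact _root_.norm_le_pi_norm (fun y : S => f y) ⟨y, hyS⟩
  · rw [hf.1 z (not_le.1 hz), norm_zero]
    exact norm_nonneg _

end IsTestFunction

lemma exists_common_scale_isTestFunction {E : Type*} [Zero E] (c₁ c₂ : ℚ_[p])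
    (γ₁ γ₂ Γ₁ Γ₂ : ℤ) : ∃ γ Γ : ℤ, 0 ≤ Γ ∧ γ ≤ Γ ∧ ∀ f : ℚ_[p] → E,
      (IsTestFunction c₁ γ₁ Γ₁ f → IsTestFunction c₁ γ Γ f) ∧
        (IsTestFunction c₂ γ₂ Γ₂ f → IsTestFunction c₁ γ Γ f) := by
  obtain ⟨N, hN⟩ := pow_unbounded_of_one_lt (dist c₂ c₁) (one_lt_natCast_prime (p := p))
  set Γ := max (max Γ₁ Γ₂) (max (N : ℤ) (min γ₁ γ₂))
  refine ⟨min γ₁ γ₂, Γ, by omega, by omega, fun f => ⟨fun hf => hf.mono (min_le_left _ _)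
    (by omega) ?_, fun hf => hf.mono (min_le_right _ _) (by omega) ?_⟩⟩
  · rw [dist_self]
    exact (zpow_pos natCast_prime_pos Γ).le
  · refine hN.le.trans ?_
    rw [← zpow_natCast]
    exact zpow_le_zpow_right₀ one_lt_natCast_prime.le (by omega)

lemma exists_forall_norm_le_of_isCompact {T E : Type*} [TopologicalSpace T]
    [SeminormedAddCommGroup E] {s : Set T} (hs : IsCompact s) {v : ℚ_[p] → T → E} {c : ℚ_[p]}
    {γ Γ : ℤ} {S : Finset ℚ_[p]}
    (hS : ∀ z, dist z c ≤ (p : ℝ) ^ Γ → ∃ y ∈ S, dist z y ≤ (p : ℝ) ^ γ)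
    (hv : ∀ τ ∈ s, IsTestFunction c γ Γ (v · τ)) (hcont : ∀ y, ContinuousOn (v y) s) :
    ∃ M, ∀ τ ∈ s, ∀ z, ‖v z τ‖ ≤ M := by
  obtain ⟨M, hM⟩ := hs.exists_bound_of_continuousOn
    (f := fun τ (y : S) => v y τ) (continuousOn_pi.2 fun y => hcont y)
  exact ⟨M, fun τ hτ z => ((hv τ hτ).norm_le_pi_norm hS z).trans (hM τ hτ)⟩

section Pointwise

variable {c x : ℚ_[p]} {γ Γ : ℤ} {k : ℤ → ℂ} {f g : ℚ_[p] → ℂ} {M δ : ℝ}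

lemma norm_mul_sub_le_ballMajorant (hΓ : 0 ≤ Γ) (hx : dist x c ≤ (p : ℝ) ^ Γ)
    (hf : ∀ z y, dist z y ≤ (p : ℝ) ^ γ → f z = f y) (hδ : ∀ z, ‖f z‖ ≤ δ) (ξ : ℚ_[p]) :
    ‖k (supIdx x ξ) * (f x - f ξ)‖ ≤ 2 * δ * ballMajorant c γ Γ k ξ := by
  have hδ₀ : 0 ≤ δ := (norm_nonneg _).trans (hδ x)
  by_cases hxξ : dist x ξ ≤ (p : ℝ) ^ γ
  · rw [hf x ξ hxξ, sub_self, mul_zero, norm_zero]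
    exact mul_nonneg (by positivity) (ballMajorant_nonneg ξ)
  rw [norm_mul, mul_comm]
  exact mul_le_mul ((norm_sub_le _ _).trans (by linarith [hδ x, hδ ξ]))
    (norm_apply_supIdx_le_ballMajorant hΓ hx (not_le.1 hxξ)) (norm_nonneg _) (by positivity)

lemma norm_mul_quad_sub_le_ballMajorant (hΓ : 0 ≤ Γ) (hx : dist x c ≤ (p : ℝ) ^ Γ)
    (hf : IsTestFunction c γ Γ f) (hg : IsTestFunction c γ Γ g)
    (hfM : ∀ z, ‖f z‖ ≤ M) (hgM : ∀ z, ‖g z‖ ≤ M) (hδ : ∀ z, ‖f z - g z‖ ≤ δ) (ξ η : ℚ_[p]) :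
    ‖k (sup3Idx x ξ η) * (f ξ * (f η - f x)) - k (sup3Idx x ξ η) * (g ξ * (g η - g x))‖ ≤
      4 * M * δ * (ballMajorant c γ Γ k η * (closedBall c ((p : ℝ) ^ Γ)).indicator 1 ξ) := by
  have hM : 0 ≤ M := (norm_nonneg _).trans (hfM x)
  have hδ₀ : 0 ≤ δ := (norm_nonneg _).trans (hδ x)
  by_cases hξ : dist ξ c ≤ (p : ℝ) ^ Γ
  swap
  · rw [Set.indicator_of_notMem (by simpa using hξ)]
    simp [hf.1 ξ (not_le.1 hξ), hg.1 ξ (not_le.1 hξ)]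
  rw [Set.indicator_of_mem (mem_closedBall.2 hξ), Pi.one_apply, mul_one]
  by_cases hxη : dist x η ≤ (p : ℝ) ^ γ
  · rw [hf.2 x η hxη, hg.2 x η hxη]
    simpa using mul_nonneg (by positivity) (ballMajorant_nonneg η)
  have hquad : ‖f ξ * (f η - f x) - g ξ * (g η - g x)‖ ≤ 4 * M * δ := by
    rw [show f ξ * (f η - f x) - g ξ * (g η - g x)
      = (f ξ - g ξ) * (f η - f x) + g ξ * ((f η - g η) - (f x - g x)) by ring]
    refine (norm_add_le _ _).trans ?_
    rw [norm_mul, norm_mul]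
    have h₁ := mul_le_mul (hδ ξ) ((norm_sub_le _ _).trans (add_le_add (hfM η) (hfM x)))
      (norm_nonneg _) hδ₀
    have h₂ := mul_le_mul (hgM ξ) ((norm_sub_le _ _).trans (add_le_add (hδ η) (hδ x)))
      (norm_nonneg _) hM
    linarith
  rw [← mul_sub, norm_mul, mul_comm]
  exact mul_le_mul hquad (norm_apply_sup3Idx_le_ballMajorant hΓ hx hξ (not_le.1 hxη))
    (norm_nonneg _) (by positivity)

end Pointwise

section Integrals

variable [MeasurableSpace ℚ_[p]] [BorelSpace ℚ_[p]]

lemma measurable_supIdx : Measurable fun q : ℚ_[p] × ℚ_[p] => supIdx q.1 q.2 := by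
  simp_rw [supIdx_eq_floor_logb]
  exact ((Real.measurable_log.comp measurable_dist).div_const _).floor

lemma measurable_sup3Idx (x : ℚ_[p]) : Measurable fun q : ℚ_[p] × ℚ_[p] => sup3Idx x q.1 q.2 :=
  (measurable_supIdx.comp (measurable_const.prodMk measurable_fst)).max
    ((measurable_supIdx.comp (measurable_const.prodMk measurable_snd)).max measurable_supIdx)

variable (μ : Measure ℚ_[p]) [μ.IsAddHaarMeasure]

lemma measureReal_closedBall_zpow_add_le (c : ℚ_[p]) (γ : ℤ) (m : ℕ) :
    μ.real (closedBall c ((p : ℝ) ^ (γ + m))) ≤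
      (p : ℝ) ^ m * μ.real (closedBall c ((p : ℝ) ^ γ)) := by
  obtain ⟨S, hcard, -, hcover⟩ := exists_finset_cover_closedBall c γ m
  calc μ.real (closedBall c ((p : ℝ) ^ (γ + m)))
      ≤ μ.real (⋃ y ∈ S, closedBall y ((p : ℝ) ^ γ)) :=
        measureReal_mono (fun z hz => by simpa using hcover z hz)
          (measure_biUnion_lt_top S.finite_toSet fun _ _ => measure_closedBall_lt_top).ne
    _ ≤ ∑ y ∈ S, μ.real (closedBall y ((p : ℝ) ^ γ)) := measureReal_biUnion_finset_le S _
    _ = S.card * μ.real (closedBall c ((p : ℝ) ^ γ)) := by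
        simp [Measure.addHaar_real_closedBall_center μ]
    _ ≤ (p : ℝ) ^ m * μ.real (closedBall c ((p : ℝ) ^ γ)) := by
        gcongr
        exact_mod_cast hcard

lemma measureReal_closedBall_le_mul_sub (c : ℚ_[p]) (Γ : ℤ) (n : ℕ) :
    μ.real (closedBall c ((p : ℝ) ^ (Γ + 1 + n))) ≤
      ((p : ℝ) ^ (Γ + 1 + (n : ℤ)) - (p : ℝ) ^ (Γ + (n : ℤ))) *
        (μ.real (closedBall c ((p : ℝ) ^ Γ)) / ((p : ℝ) ^ Γ - (p : ℝ) ^ (Γ - 1))) := by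
  have hp0 : (p : ℝ) ≠ 0 := natCast_prime_pos.ne'
  have hgap : 0 < (p : ℝ) ^ Γ - (p : ℝ) ^ (Γ - 1) :=
    sub_pos.2 (zpow_lt_zpow_right₀ one_lt_natCast_prime (by omega))
  have hΔ : (p : ℝ) ^ (Γ + 1 + (n : ℤ)) - (p : ℝ) ^ (Γ + (n : ℤ))
      = (p : ℝ) ^ (n + 1) * ((p : ℝ) ^ Γ - (p : ℝ) ^ (Γ - 1)) := by
    rw [mul_sub, ← zpow_natCast, ← zpow_add₀ hp0, ← zpow_add₀ hp0]
    push_cast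
    ring_nf
  have hball := measureReal_closedBall_zpow_add_le μ c Γ (n + 1)
  push_cast at hball
  rw [hΔ, mul_assoc, mul_div_cancel₀ _ hgap.ne']
  convert hball using 4
  ring

lemma integrableOn_compl_closedBall_comp_supIdx {E : Type*} [NormedAddCommGroup E]
    (c : ℚ_[p]) (Γ : ℤ) {a : ℤ → E}
    (ha : Summable fun n : ℕ =>
      ‖a (Γ + 1 + n)‖ * ((p : ℝ) ^ (Γ + 1 + (n : ℤ)) - (p : ℝ) ^ (Γ + (n : ℤ)))) :
    IntegrableOn (fun η => a (supIdx c η)) (closedBall c ((p : ℝ) ^ Γ))ᶜ μ := by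
  set shell : ℕ → Set ℚ_[p] := fun n =>
    closedBall c ((p : ℝ) ^ (Γ + 1 + n)) \ closedBall c ((p : ℝ) ^ (Γ + n))
  have hshell_meas : ∀ n, MeasurableSet (shell n) := fun n =>
    measurableSet_closedBall.diff measurableSet_closedBall
  have hshell : ∀ n, ∀ η ∈ shell n, a (supIdx c η) = a (Γ + 1 + n) := by
    rintro n η ⟨h₂, h₁⟩
    rw [mem_closedBall, dist_comm] at h₂
    rw [mem_closedBall, not_le, dist_comm] at h₁
    rw [supIdx_eq_of_dist_mem_Ioc h₁ (by rwa [add_right_comm]), add_right_comm]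
  refine IntegrableOn.mono_set (integrableOn_iUnion_of_summable_integral_norm
    (fun n => (integrableOn_const measure_closedBall_lt_top.ne).mono_set sdiff_subset
      |>.congr_fun (fun η hη => (hshell n η hη).symm) (hshell_meas n)) ?_)
    (compl_closedBall_subset_iUnion_closedBall_diff c Γ)
  refine (ha.mul_right (μ.real (closedBall c ((p : ℝ) ^ Γ)) /
      ((p : ℝ) ^ Γ - (p : ℝ) ^ (Γ - 1)))).of_nonneg_of_le
    (fun n => integral_nonneg fun _ => norm_nonneg _) fun n => ?_
  rw [setIntegral_congr_fun (hshell_meas n) fun η hη => by rw [hshell n η hη],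
    setIntegral_const, smul_eq_mul, mul_comm, mul_assoc]
  gcongr
  exact (measureReal_mono sdiff_subset measure_closedBall_lt_top.ne).trans
    (measureReal_closedBall_le_mul_sub μ c Γ n)

lemma integrable_ballMajorant {E : Type*} [NormedAddCommGroup E] {k : ℤ → E}
    (hk : Summable fun n : ℕ =>
      ‖k (Γ + 1 + n)‖ * ((p : ℝ) ^ (Γ + 1 + (n : ℤ)) - (p : ℝ) ^ (Γ + (n : ℤ)))) :
    Integrable (ballMajorant c γ Γ k) μ := by
  classical
  exact Integrable.piecewise measurableSet_closedBall
    (integrableOn_const measure_closedBall_lt_top.ne)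
    (integrableOn_compl_closedBall_comp_supIdx μ c Γ hk).norm

variable {c x : ℚ_[p]} {γ Γ : ℤ} {F G : ℚ_[p] → ℤ → ℂ} {k : ℤ → ℂ} {f g : ℚ_[p] → ℂ}
  {M δ : ℝ}

lemma norm_integral_mul_sub_sub_le (hΓ : 0 ≤ Γ) (hx : dist x c ≤ (p : ℝ) ^ Γ)
    (hk : Summable fun n : ℕ =>
      ‖k (Γ + 1 + n)‖ * ((p : ℝ) ^ (Γ + 1 + (n : ℤ)) - (p : ℝ) ^ (Γ + (n : ℤ))))
    (hf : ∀ z y, dist z y ≤ (p : ℝ) ^ γ → f z = f y)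
    (hg : ∀ z y, dist z y ≤ (p : ℝ) ^ γ → g z = g y)
    (hfM : ∀ z, ‖f z‖ ≤ M) (hgM : ∀ z, ‖g z‖ ≤ M) (hδ : ∀ z, ‖f z - g z‖ ≤ δ) :
    ‖(∫ ξ, k (supIdx x ξ) * (f x - f ξ) ∂μ) - ∫ ξ, k (supIdx x ξ) * (g x - g ξ) ∂μ‖ ≤
      2 * δ * ∫ ξ, ballMajorant c γ Γ k ξ ∂μ := by
  have hmeas : ∀ {h : ℚ_[p] → ℂ}, (∀ z y, dist z y ≤ (p : ℝ) ^ γ → h z = h y) →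
      AEStronglyMeasurable (fun ξ => k (supIdx x ξ) * (h x - h ξ)) μ := fun hh =>
    ((measurable_from_top.comp (measurable_supIdx.comp (measurable_const.prodMk measurable_id))).mul
      (measurable_const.sub (continuous_of_forall_dist_le_imp_eq
        (zpow_pos natCast_prime_pos γ) hh).measurable)).aestronglyMeasurable
  refine norm_integral_sub_integral_le (integrable_ballMajorant μ hk) (hmeas hf) (hmeas hg)
    (norm_mul_sub_le_ballMajorant hΓ hx hf hfM) (norm_mul_sub_le_ballMajorant hΓ hx hg hgM)
    fun ξ => ?_
  rw [← mul_sub, show f x - f ξ - (g x - g ξ) = (f - g) x - (f - g) ξ by simp; ring]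
  exact norm_mul_sub_le_ballMajorant hΓ hx
    (fun z y hzy => by simp [hf z y hzy, hg z y hzy]) hδ ξ

lemma measurable_mul_quad (hf : ∀ z y, dist z y ≤ (p : ℝ) ^ γ → f z = f y) :
    Measurable fun q : ℚ_[p] × ℚ_[p] => k (sup3Idx x q.1 q.2) * (f q.1 * (f q.2 - f x)) :=
  have hfm := (continuous_of_forall_dist_le_imp_eq (zpow_pos natCast_prime_pos γ) hf).measurable
  (measurable_from_top.comp (measurable_sup3Idx x)).mul
    ((hfm.comp measurable_fst).mul ((hfm.comp measurable_snd).sub measurable_const))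

lemma norm_integral_mul_quad_sub_le (hΓ : 0 ≤ Γ) (hx : dist x c ≤ (p : ℝ) ^ Γ)
    (hk : Summable fun n : ℕ =>
      ‖k (Γ + 1 + n)‖ * ((p : ℝ) ^ (Γ + 1 + (n : ℤ)) - (p : ℝ) ^ (Γ + (n : ℤ))))
    (hf : IsTestFunction c γ Γ f) (hg : IsTestFunction c γ Γ g)
    (hfM : ∀ z, ‖f z‖ ≤ M) (hgM : ∀ z, ‖g z‖ ≤ M) (hδ : ∀ z, ‖f z - g z‖ ≤ δ) (ξ : ℚ_[p]) :
    ‖(∫ η, k (sup3Idx x ξ η) * (f ξ * (f η - f x)) ∂μ) -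
        ∫ η, k (sup3Idx x ξ η) * (g ξ * (g η - g x)) ∂μ‖ ≤
      4 * M * δ * (∫ η, ballMajorant c γ Γ k η ∂μ) *
        (closedBall c ((p : ℝ) ^ Γ)).indicator 1 ξ := by
  have hM : 0 ≤ M := (norm_nonneg _).trans (hfM x)
  have hdom : ∀ {h : ℚ_[p] → ℂ}, IsTestFunction c γ Γ h → (∀ z, ‖h z‖ ≤ M) → ∀ η,
      ‖k (sup3Idx x ξ η) * (h ξ * (h η - h x))‖ ≤ 4 * M * M *
        (ballMajorant c γ Γ k η * (closedBall c ((p : ℝ) ^ Γ)).indicator 1 ξ) :=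
    fun hh hhM η => by
      simpa using norm_mul_quad_sub_le_ballMajorant hΓ hx hh IsTestFunction.zero hhM
        (fun _ => by simpa using hM) (fun z => by simpa using hhM z) ξ η
  refine (norm_integral_sub_integral_le
    ((integrable_ballMajorant μ hk).mul_const ((closedBall c ((p : ℝ) ^ Γ)).indicator 1 ξ))
    ((measurable_mul_quad hf.2).comp measurable_prodMk_left).aestronglyMeasurable
    ((measurable_mul_quad hg.2).comp measurable_prodMk_left).aestronglyMeasurable
    (hdom hf hfM) (hdom hg hgM)
    (norm_mul_quad_sub_le_ballMajorant hΓ hx hf hg hfM hgM hδ ξ)).trans_eq ?_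
  rw [integral_mul_const]
  ring

lemma norm_integral_integral_mul_quad_sub_le (hΓ : 0 ≤ Γ) (hx : dist x c ≤ (p : ℝ) ^ Γ)
    (hk : Summable fun n : ℕ =>
      ‖k (Γ + 1 + n)‖ * ((p : ℝ) ^ (Γ + 1 + (n : ℤ)) - (p : ℝ) ^ (Γ + (n : ℤ))))
    (hf : IsTestFunction c γ Γ f) (hg : IsTestFunction c γ Γ g)
    (hfM : ∀ z, ‖f z‖ ≤ M) (hgM : ∀ z, ‖g z‖ ≤ M) (hδ : ∀ z, ‖f z - g z‖ ≤ δ) :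
    ‖(∫ ξ, ∫ η, k (sup3Idx x ξ η) * (f ξ * (f η - f x)) ∂μ ∂μ) -
        ∫ ξ, ∫ η, k (sup3Idx x ξ η) * (g ξ * (g η - g x)) ∂μ ∂μ‖ ≤
      4 * M * δ * ((∫ η, ballMajorant c γ Γ k η ∂μ) * μ.real (closedBall c ((p : ℝ) ^ Γ))) := by
  have hM : 0 ≤ M := (norm_nonneg _).trans (hfM x)
  -- Comparing with the zero function bounds each inner integral on its own.
  have hdom : ∀ {h : ℚ_[p] → ℂ}, IsTestFunction c γ Γ h → (∀ z, ‖h z‖ ≤ M) → ∀ ξ,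
      ‖∫ η, k (sup3Idx x ξ η) * (h ξ * (h η - h x)) ∂μ‖ ≤
        4 * M * M * (∫ η, ballMajorant c γ Γ k η ∂μ) *
          (closedBall c ((p : ℝ) ^ Γ)).indicator 1 ξ := fun hh hhM ξ => by
    simpa using norm_integral_mul_quad_sub_le μ hΓ hx hk hh IsTestFunction.zero hhM
      (fun _ => by simpa using hM) (fun z => by simpa using hhM z) ξ
  refine (norm_integral_sub_integral_le (m := (closedBall c ((p : ℝ) ^ Γ)).indicator 1)
    ((integrable_indicator_iff measurableSet_closedBall).2
      (integrableOn_const measure_closedBall_lt_top.ne))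
    (measurable_mul_quad hf.2).stronglyMeasurable.integral_prod_right'.aestronglyMeasurable
    (measurable_mul_quad hg.2).stronglyMeasurable.integral_prod_right'.aestronglyMeasurable
    (hdom hf hfM) (hdom hg hgM)
    (norm_integral_mul_quad_sub_le μ hΓ hx hk hf hg hfM hgM hδ)).trans_eq ?_
  rw [integral_indicator_one measurableSet_closedBall, mul_assoc]

lemma norm_cascadeOp_sub_le (hΓ : 0 ≤ Γ) (hx : dist x c ≤ (p : ℝ) ^ Γ)
    (hFs : Summable fun n : ℕ =>
      ‖F x (Γ + 1 + n)‖ * ((p : ℝ) ^ (Γ + 1 + (n : ℤ)) - (p : ℝ) ^ (Γ + (n : ℤ))))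
    (hGs : Summable fun n : ℕ =>
      ‖G x (Γ + 1 + n)‖ * ((p : ℝ) ^ (Γ + 1 + (n : ℤ)) - (p : ℝ) ^ (Γ + (n : ℤ))))
    (hf : IsTestFunction c γ Γ f) (hg : IsTestFunction c γ Γ g)
    (hfM : ∀ z, ‖f z‖ ≤ M) (hgM : ∀ z, ‖g z‖ ≤ M) (hδ : ∀ z, ‖f z - g z‖ ≤ δ) :
    ‖cascadeOp μ F G f x - cascadeOp μ F G g x‖ ≤
      (4 * M * ((∫ η, ballMajorant c γ Γ (F x) η ∂μ) * μ.real (closedBall c ((p : ℝ) ^ Γ))) +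
        2 * ∫ ξ, ballMajorant c γ Γ (G x) ξ ∂μ) * δ := by
  rw [cascadeOp, cascadeOp, add_sub_add_comm]
  refine (norm_add_le _ _).trans ((add_le_add
    (norm_integral_integral_mul_quad_sub_le μ hΓ hx hFs hf hg hfM hgM hδ)
    (norm_integral_mul_sub_sub_le μ hΓ hx hGs hf.2 hg.2 hfM hgM hδ)).trans_eq ?_)
  ring

lemma exists_forall_norm_cascadeOp_sub_le {T : Type*} [TopologicalSpace T] {s : Set T}
    (hs : IsCompact s) {v w : ℚ_[p] → T → ℂ} (hΓ : 0 ≤ Γ) (hFs : KernelSummable F)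
    (hGs : KernelSummable G) {S : Finset ℚ_[p]} (hSball : ∀ y ∈ S, dist y c ≤ (p : ℝ) ^ Γ)
    (hScover : ∀ z, dist z c ≤ (p : ℝ) ^ Γ → ∃ y ∈ S, dist z y ≤ (p : ℝ) ^ γ)
    (hv : ∀ τ ∈ s, IsTestFunction c γ Γ (v · τ)) (hw : ∀ τ ∈ s, IsTestFunction c γ Γ (w · τ))
    (hvc : ∀ y, ContinuousOn (v y) s) (hwc : ∀ y, ContinuousOn (w y) s) :
    ∃ K, 0 ≤ K ∧ ∀ τ ∈ s, ∀ y ∈ S, ‖cascadeOp μ F G (v · τ) y - cascadeOp μ F G (w · τ) y‖ ≤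
      K * ‖fun y : S => v y τ - w y τ‖ := by
  obtain ⟨Mv, hMv⟩ := exists_forall_norm_le_of_isCompact hs hScover hv hvc
  obtain ⟨Mw, hMw⟩ := exists_forall_norm_le_of_isCompact hs hScover hw hwc
  set M := max (max Mv Mw) 0
  set K : ℚ_[p] → ℝ := fun y =>
    4 * M * ((∫ η, ballMajorant c γ Γ (F y) η ∂μ) * μ.real (closedBall c ((p : ℝ) ^ Γ))) +
      2 * ∫ ξ, ballMajorant c γ Γ (G y) ξ ∂μ
  have hK : ∀ y, 0 ≤ K y := fun y => by
    have hF : 0 ≤ ∫ η, ballMajorant c γ Γ (F y) η ∂μ :=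
      integral_nonneg fun η => ballMajorant_nonneg η
    have hG : 0 ≤ ∫ ξ, ballMajorant c γ Γ (G y) ξ ∂μ :=
      integral_nonneg fun ξ => ballMajorant_nonneg ξ
    positivity
  refine ⟨∑ y ∈ S, K y, Finset.sum_nonneg fun y _ => hK y, fun τ hτ y hy => ?_⟩
  refine (norm_cascadeOp_sub_le (M := M) μ hΓ (hSball y hy) (hFs y Γ) (hGs y Γ) (hv τ hτ)
    (hw τ hτ) (fun z => (hMv τ hτ z).trans ((le_max_left _ _).trans (le_max_left _ _)))
    (fun z => (hMw τ hτ z).trans ((le_max_right _ _).trans (le_max_left _ _)))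
    (((hv τ hτ).sub (hw τ hτ)).norm_le_pi_norm hScover)).trans ?_
  exact mul_le_mul_of_nonneg_right (Finset.single_le_sum (fun y _ => hK y) hy) (norm_nonneg _)

lemma eq_of_satisfiesCascade_of_isTestFunction (hΓ : 0 ≤ Γ) (hγΓ : γ ≤ Γ)
    (hFs : KernelSummable F) (hGs : KernelSummable G) {v w : ℚ_[p] → ℝ → ℂ}
    (hv : ∀ τ, 0 ≤ τ → IsTestFunction c γ Γ (v · τ))
    (hw : ∀ τ, 0 ≤ τ → IsTestFunction c γ Γ (w · τ))
    (hvc : ∀ y, ContinuousOn (v y) (Ici 0)) (hwc : ∀ y, ContinuousOn (w y) (Ici 0))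
    (hveq : SatisfiesCascade μ F G v) (hweq : SatisfiesCascade μ F G w) (h0 : ∀ y, v y 0 = w y 0)
    {t : ℝ} (ht : 0 ≤ t) (x : ℚ_[p]) : v x t = w x t := by
  obtain ⟨S, -, hSball, hScover⟩ := exists_finset_cover_closedBall c γ (Γ - γ).toNat
  rw [Int.toNat_of_nonneg (sub_nonneg.2 hγΓ), add_sub_cancel] at hSball hScover
  obtain ⟨K, hK₀, hK⟩ := exists_forall_norm_cascadeOp_sub_le μ isCompact_Icc hΓ hFs hGs hSball
    hScover (fun τ hτ => hv τ hτ.1) (fun τ hτ => hw τ hτ.1)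
    (fun y => (hvc y).mono Icc_subset_Ici_self) (fun y => (hwc y).mono Icc_subset_Ici_self)
  set u : ℝ → S → ℂ := fun τ y => v y τ - w y τ
  have hu : u t = 0 := eq_zero_of_norm_deriv_le_mul_norm (K := K) ht
    (continuousOn_pi.2 fun y => ((hvc y).sub (hwc y)).mono Icc_subset_Ici_self)
    (funext fun y => by simp [u, h0])
    (fun s hs => hasDerivAt_pi.2 fun y => (hveq y s hs.1).sub (hweq y s hs.1))
    fun s hs => (pi_norm_le_iff_of_nonneg (by positivity)).2 fun y => by
      rw [neg_sub_neg, norm_sub_rev]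
      exact hK s (Ioo_subset_Icc_self hs) y y.2
  have hx : ‖v x t - w x t‖ ≤ ‖u t‖ := ((hv t ht).sub (hw t ht)).norm_le_pi_norm hScover x
  rwa [hu, norm_zero, norm_le_zero_iff, sub_eq_zero] at hx

end Integrals

end Padic

open Padic

theorem cascade_cauchy_uniqueness_general {p : ℕ} [Fact p.Prime]
    [MeasurableSpace ℚ_[p]] [BorelSpace ℚ_[p]]
    (μ : Measure ℚ_[p]) [μ.IsAddHaarMeasure]
    (F G : ℚ_[p] → ℤ → ℂ)
    (hFs : KernelSummable F) (hGs : KernelSummable G)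
    (v w : ℚ_[p] → ℝ → ℂ)
    (hvD : ∃ (c₀ : ℚ_[p]) (γB γ₀ : ℤ), ∀ t : ℝ, 0 ≤ t →
        (∀ x, (p : ℝ) ^ γB < dist x c₀ → v x t = 0) ∧
        (∀ x y, dist x y ≤ (p : ℝ) ^ γ₀ → v x t = v y t) ∧
        (∫ x, v x t ∂μ) = 0)
    (hwD : ∃ (c₀ : ℚ_[p]) (γB γ₀ : ℤ), ∀ t : ℝ, 0 ≤ t →
        (∀ x, (p : ℝ) ^ γB < dist x c₀ → w x t = 0) ∧
        (∀ x y, dist x y ≤ (p : ℝ) ^ γ₀ → w x t = w y t) ∧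
        (∫ x, w x t ∂μ) = 0)
    (hvC : ∀ x, ContDiffOn ℝ 1 (fun t => v x t) (Set.Ici (0 : ℝ)))
    (hwC : ∀ x, ContDiffOn ℝ 1 (fun t => w x t) (Set.Ici (0 : ℝ)))
    (hveq : SatisfiesCascade μ F G v) (hweq : SatisfiesCascade μ F G w)
    (h0 : ∀ x, v x 0 = w x 0) :
    ∀ x : ℚ_[p], ∀ t : ℝ, 0 ≤ t → v x t = w x t := by
  obtain ⟨cv, Γv, γv, hv⟩ := hvD
  obtain ⟨cw, Γw, γw, hw⟩ := hwD
  obtain ⟨γ, Γ, hΓ, hγΓ, hscale⟩ := exists_common_scale_isTestFunction (E := ℂ) cv cw γv γw Γv Γw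
  intro x t ht
  exact eq_of_satisfiesCascade_of_isTestFunction μ hΓ hγΓ hFs hGs
    (fun τ hτ => (hscale _).1 ⟨(hv τ hτ).1, (hv τ hτ).2.1⟩)
    (fun τ hτ => (hscale _).2 ⟨(hw τ hτ).1, (hw τ hτ).2.1⟩)
    (fun y => (hvC y).continuousOn) (fun y => (hwC y).continuousOn) hveq hweq h0 ht x

/-- Uniqueness of solutions of the Cauchy problem for the quadratic cascade
equation with summable ball kernels `F`, `G`: two solutions `v`, `w` of class
`D_0(ℚ_p) ⊗ C¹([0,∞))` with the same initial condition coincide for all `x` and `t ≥ 0`. -/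
theorem cascade_cauchy_uniqueness {p : ℕ} [Fact p.Prime]
    [MeasurableSpace ℚ_[p]] [BorelSpace ℚ_[p]]
    (μ : Measure ℚ_[p]) [μ.IsAddHaarMeasure] (hμ : μ (Metric.closedBall 0 1) = 1)
    (F G : ℚ_[p] → ℤ → ℂ) (hF : IsBallKernel F) (hG : IsBallKernel G)
    (hFs : KernelSummable F) (hGs : KernelSummable G)
    (v w : ℚ_[p] → ℝ → ℂ)
    (hvD : ∃ (c₀ : ℚ_[p]) (γB γ₀ : ℤ), ∀ t : ℝ, 0 ≤ t →
        (∀ x, (p : ℝ) ^ γB < dist x c₀ → v x t = 0) ∧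
        (∀ x y, dist x y ≤ (p : ℝ) ^ γ₀ → v x t = v y t) ∧
        (∫ x, v x t ∂μ) = 0)
    (hwD : ∃ (c₀ : ℚ_[p]) (γB γ₀ : ℤ), ∀ t : ℝ, 0 ≤ t →
        (∀ x, (p : ℝ) ^ γB < dist x c₀ → w x t = 0) ∧
        (∀ x y, dist x y ≤ (p : ℝ) ^ γ₀ → w x t = w y t) ∧
        (∫ x, w x t ∂μ) = 0)
    (hvC : ∀ x, ContDiffOn ℝ 1 (fun t => v x t) (Set.Ici (0 : ℝ)))
    (hwC : ∀ x, ContDiffOn ℝ 1 (fun t => w x t) (Set.Ici (0 : ℝ)))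
    (hveq : SatisfiesCascade μ F G v) (hweq : SatisfiesCascade μ F G w)
    (h0 : ∀ x, v x 0 = w x 0) :
    ∀ x : ℚ_[p], ∀ t : ℝ, 0 ≤ t → v x t = w x t :=
  cascade_cauchy_uniqueness_general μ F G hFs hGs v w hvD hwD hvC hwC hveq hweq h0
end

section
/- Let F be a summable ball kernel, let φ be an ultrametric wavelet with ball I and ψ an ultrametric wavelet with ball J, and suppose the balls I and J are disjoint. Then 𝓘[φ, ψ](x) = 0 for every x ∈ ℚ_p. -/
open MeasureTheory

/-- The nonlinear interaction integral
`𝓘[φ,ψ](x) = ∫∫ F(sup(x,ξ,η)) φ(ξ)(ψ(η) - ψ(x)) dμ(ξ) dμ(η)`. -/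
noncomputable def IIntegral {p : ℕ} [Fact p.Prime] [MeasurableSpace ℚ_[p]]
    (μ : Measure ℚ_[p]) (F : ℚ_[p] → ℤ → ℂ) (φ ψ : ℚ_[p] → ℂ) (x : ℚ_[p]) : ℂ :=
  ∫ ξ, ∫ η, F x (sup3Idx x ξ η) * (φ ξ * (ψ η - ψ x)) ∂μ ∂μ


/-! If `x` lies outside the ball `I` of `φ`, the smallest ball containing `x, ξ, η` does not
depend on where `ξ` sits in `I`, so the `ξ`-integral is a multiple of the mean of `φ`, which
vanishes. Otherwise `x ∉ J` and `ψ x = 0`; for `ξ` in `I`, hence outside `J`, that ball does not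
depend on where `η` sits in `J`, so the `η`-integral is a multiple of the mean of `ψ`. -/

theorem IsUltrametricDist.dist_eq_of_dist_lt {X : Type*} [PseudoMetricSpace X]
    [IsUltrametricDist X] {x y c : X} (h : dist y c < dist x c) : dist x y = dist x c := by
  rw [IsUltrametricDist.dist_eq_max_of_dist_ne_dist x c y (by rw [dist_comm c y]; exact h.ne'),
    dist_comm c y, max_eq_left h.le]

section SmallestBall

variable {p : ℕ} [Fact p.Prime]

lemma zpow_supIdx {x y : ℚ_[p]} (h : x ≠ y) : (p : ℝ) ^ supIdx x y = dist x y := by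
  rw [dist_eq_norm, Padic.norm_eq_zpow_neg_valuation (sub_ne_zero.mpr h), supIdx]

lemma supIdx_self (x : ℚ_[p]) : supIdx x x = 0 := by
  simp [supIdx]

lemma supIdx_eq_of_dist_eq {x y a b : ℚ_[p]} (h : dist x y = dist a b) :
    supIdx x y = supIdx a b := by
  rcases eq_or_ne x y with rfl | hxy
  · rw [dist_self, eq_comm, dist_eq_zero] at h
    rw [h, supIdx_self, supIdx_self]
  have hab : a ≠ b := by
    rintro rfl
    exact hxy (dist_eq_zero.mp (h.trans (dist_self a)))
  have hp : (1 : ℝ) < p := mod_cast (Fact.out : p.Prime).one_lt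
  rw [← zpow_supIdx hxy, ← zpow_supIdx hab] at h
  exact zpow_right_injective₀ (zero_lt_one.trans hp) hp.ne' h

lemma supIdx_comm (x y : ℚ_[p]) : supIdx x y = supIdx y x :=
  supIdx_eq_of_dist_eq (dist_comm x y)

lemma supIdx_lt_supIdx {x y a b : ℚ_[p]} (hxy : x ≠ y) (h : dist x y < dist a b) :
    supIdx x y < supIdx a b := by
  have hab : a ≠ b := by
    rintro rfl
    exact (dist_nonneg.trans_lt h).ne' (dist_self a)
  have hp : (1 : ℝ) < p := mod_cast (Fact.out : p.Prime).one_lt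
  rw [← zpow_supIdx hxy, ← zpow_supIdx hab] at h
  exact (zpow_lt_zpow_iff_right₀ hp).mp h

lemma supIdx_eq_supIdx_center {x y c : ℚ_[p]} {r : ℝ} (hx : r < dist x c)
    (hy : dist y c ≤ r) : supIdx x y = supIdx x c :=
  supIdx_eq_of_dist_eq (IsUltrametricDist.dist_eq_of_dist_lt (hy.trans_lt hx))

lemma sup3Idx_eq_of_dist_le_right {x ξ η c : ℚ_[p]} {r : ℝ} (hx : r < dist x c)
    (hξ : r < dist ξ c) (hη : dist η c ≤ r) : sup3Idx x ξ η = sup3Idx x ξ c := by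
  rw [sup3Idx, sup3Idx, supIdx_eq_supIdx_center hx hη, supIdx_eq_supIdx_center hξ hη]

lemma sup3Idx_eq_of_dist_le_mid {x ξ η c : ℚ_[p]} {r : ℝ} (hx : r < dist x c)
    (hξ : dist ξ c ≤ r) (hηξ : η ≠ ξ) (hηc : η ≠ c) : sup3Idx x ξ η = sup3Idx x c η := by
  rw [sup3Idx, sup3Idx, supIdx_eq_supIdx_center hx hξ]
  rcases le_or_gt (dist η c) r with hη | hη
  · have hξη : supIdx ξ η < supIdx x c := by
      refine supIdx_lt_supIdx hηξ.symm ((dist_triangle_max ξ c η).trans_lt ?_)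
      rw [dist_comm c η]
      exact max_lt (hξ.trans_lt hx) (hη.trans_lt hx)
    have hcη : supIdx c η < supIdx x c :=
      supIdx_lt_supIdx hηc.symm (by rw [dist_comm]; exact hη.trans_lt hx)
    omega
  · rw [supIdx_comm ξ η, supIdx_comm c η, supIdx_eq_supIdx_center hη hξ]

end SmallestBall

section InteractionIntegral

variable {p : ℕ} [Fact p.Prime] [MeasurableSpace ℚ_[p]] (μ : Measure ℚ_[p])
  (F : ℚ_[p] → ℤ → ℂ) {φ ψ : ℚ_[p] → ℂ} {x c : ℚ_[p]} {r : ℝ}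

lemma IIntegral_eq_zero_of_dist_gt_left [NullSingletonClass μ]
    (hφ : ∀ ξ, r < dist ξ c → φ ξ = 0) (hφ0 : ∫ ξ, φ ξ ∂μ = 0) (hx : r < dist x c) :
    IIntegral μ F φ ψ x = 0 := by
  have hinner : ∀ ξ, ∫ η, F x (sup3Idx x ξ η) * (φ ξ * (ψ η - ψ x)) ∂μ =
      φ ξ * ∫ η, F x (sup3Idx x c η) * (ψ η - ψ x) ∂μ := by
    intro ξ
    rcases le_or_gt (dist ξ c) r with hξ | hξ
    · simp_rw [mul_left_comm _ (φ ξ), integral_const_mul]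
      congr 1
      refine integral_congr_ae ?_
      -- `supIdx y y = 0` is a junk value, so `η = ξ` and `η = c` must be discarded
      filter_upwards [(Set.toFinite {ξ, c}).countable.ae_notMem μ] with η hη
      simp only [Set.mem_insert_iff, Set.mem_singleton_iff, not_or] at hη
      rw [sup3Idx_eq_of_dist_le_mid hx hξ hη.1 hη.2]
    · simp [hφ ξ hξ]
  simp_rw [IIntegral, hinner, integral_mul_const, hφ0, zero_mul]

lemma IIntegral_eq_zero_of_dist_gt_right (hψ : ∀ η, r < dist η c → ψ η = 0)
    (hψ0 : ∫ η, ψ η ∂μ = 0) (hφ : ∀ ξ, dist ξ c ≤ r → φ ξ = 0) (hx : r < dist x c) :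
    IIntegral μ F φ ψ x = 0 := by
  have hψx := hψ x hx
  have hinner : ∀ ξ, ∫ η, F x (sup3Idx x ξ η) * (φ ξ * (ψ η - ψ x)) ∂μ = 0 := by
    intro ξ
    rcases le_or_gt (dist ξ c) r with hξ | hξ
    · simp [hφ ξ hξ]
    · have hconst : ∀ η, F x (sup3Idx x ξ η) * (φ ξ * (ψ η - ψ x)) =
          φ ξ * F x (sup3Idx x ξ c) * ψ η := by
        intro η
        rcases le_or_gt (dist η c) r with hη | hη
        · rw [sup3Idx_eq_of_dist_le_right hx hξ hη, hψx]; ring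
        · rw [hψ η hη, hψx]; ring
      simp_rw [hconst, integral_const_mul, hψ0, mul_zero]
  simp_rw [IIntegral, hinner, integral_zero]

end InteractionIntegral

theorem I_integral_disjoint_balls_general {p : ℕ} [Fact p.Prime]
    [MeasurableSpace ℚ_[p]] [BorelSpace ℚ_[p]]
    (μ : Measure ℚ_[p]) [μ.IsAddHaarMeasure]
    (F : ℚ_[p] → ℤ → ℂ)
    (φ ψ : ℚ_[p] → ℂ) (cI cJ : ℚ_[p]) (γI γJ : ℤ)
    (hφ : IsWavelet μ φ cI γI) (hψ : IsWavelet μ ψ cJ γJ)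
    (hdisj : Disjoint (Metric.closedBall cI ((p : ℝ) ^ γI))
      (Metric.closedBall cJ ((p : ℝ) ^ γJ))) :
    ∀ x : ℚ_[p], IIntegral μ F φ ψ x = 0 := by
  intro x
  have hJI : ∀ y, dist y cJ ≤ (p : ℝ) ^ γJ → (p : ℝ) ^ γI < dist y cI := fun y hyJ =>
    not_le.mp fun hyI => Set.disjoint_left.mp hdisj (Metric.mem_closedBall.mpr hyI)
      (Metric.mem_closedBall.mpr hyJ)
  rcases le_or_gt (dist x cJ) ((p : ℝ) ^ γJ) with hxJ | hxJ
  · exact IIntegral_eq_zero_of_dist_gt_left μ F hφ.1 hφ.2.2.1 (hJI x hxJ)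
  · exact IIntegral_eq_zero_of_dist_gt_right μ F hψ.1 hψ.2.2.1
      (fun ξ hξ => hφ.1 ξ (hJI ξ hξ)) hxJ

/-- If the balls `I` of `φ` and `J` of `ψ` are disjoint,
then `𝓘[φ,ψ](x) = 0` for every `x`. -/
theorem I_integral_disjoint_balls {p : ℕ} [Fact p.Prime]
    [MeasurableSpace ℚ_[p]] [BorelSpace ℚ_[p]]
    (μ : Measure ℚ_[p]) [μ.IsAddHaarMeasure] (hμ : μ (Metric.closedBall 0 1) = 1)
    (F : ℚ_[p] → ℤ → ℂ) (hF : IsBallKernel F) (hFs : KernelSummable F)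
    (φ ψ : ℚ_[p] → ℂ) (cI cJ : ℚ_[p]) (γI γJ : ℤ)
    (hφ : IsWavelet μ φ cI γI) (hψ : IsWavelet μ ψ cJ γJ)
    (hdisj : Disjoint (Metric.closedBall cI ((p : ℝ) ^ γI))
      (Metric.closedBall cJ ((p : ℝ) ^ γJ))) :
    ∀ x : ℚ_[p], IIntegral μ F φ ψ x = 0 :=
  I_integral_disjoint_balls_general μ F φ ψ cI cJ γI γJ hφ hψ hdisj
end

section
/- Let α > 0 be a real number and let ψ be an ultrametric wavelet with ball of radius p^{γ}. Then for every x ∈ ℚ_p the integral ∫ |x − y|_p^{−1−α} (ψ(x) − ψ(y)) dμ(y) converges absolutely and equals p^{−αγ} · (1 − p^{−1−α})/(1 − p^{−α}) · ψ(x). -/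
open MeasureTheory

/-!
Every ball of radius `p ^ γ` in `ℚ_[p]` is the disjoint union of `p` translates of a ball of
radius `p ^ (γ - 1)`, so for the normalized Haar measure the ball of radius `p ^ γ` has measure
`p ^ γ` and the sphere `‖y - x‖ = p ^ k` has measure `p ^ k - p ^ (k - 1)`.

If `x ∈ B = B(c, p ^ γ)`, then `B = B(x, p ^ γ)`. On `B` the integrand vanishes unless
`‖x - y‖ = p ^ γ`, since `ψ` is constant on `B(x, p ^ (γ - 1))`; so there it equals
`p ^ (-γ(1+α)) (ψ x - ψ y)`, whose integral is `p ^ (-γα) ψ x` by the zero mean of `ψ`. Off `B`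
it equals `ψ x ‖x - y‖ ^ (-1-α)`, and summing over the spheres `‖x - y‖ = p ^ k`, `k > γ`, gives
a geometric series. If `x ∉ B`, then `‖x - y‖ = ‖x - c‖` wherever `ψ y ≠ 0`, so the integral is
a multiple of `∫ ψ = 0`.
-/

open Metric

theorem zpow_rpow_neg_one_add_mul_self {a : ℝ} (ha : 0 < a) (α : ℝ) (k : ℤ) :
    (a ^ k) ^ (-(1 + α)) * a ^ k = (a ^ (-α)) ^ k := by
  rw [← Real.rpow_add_one (zpow_pos ha k).ne', Real.rpow_zpow_comm ha.le]
  congr 1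
  ring

theorem zpow_rpow_neg_one_add_mul_sub {a : ℝ} (ha : 0 < a) (α : ℝ) (k : ℤ) :
    (a ^ k) ^ (-(1 + α)) * (a ^ k - a ^ (k - 1)) = (1 - a⁻¹) * (a ^ (-α)) ^ k := by
  rw [← zpow_rpow_neg_one_add_mul_self ha, zpow_sub_one₀ ha.ne']
  ring

theorem rpow_neg_zpow_add_geometric_tail {a α : ℝ} (ha : 1 < a) (hα : 0 < α) (γ : ℤ) :
    (a ^ (-α)) ^ γ + (1 - a⁻¹) * (a ^ (-α)) ^ (γ + 1) / (1 - a ^ (-α)) =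
      a ^ (-(α * γ)) * ((1 - a ^ (-(1 + α))) / (1 - a ^ (-α))) := by
  have ha0 : 0 < a := one_pos.trans ha
  have hr : 1 - a ^ (-α) ≠ 0 :=
    (sub_pos.mpr (Real.rpow_lt_one_of_one_lt_of_neg ha (by linarith))).ne'
  rw [← neg_mul, Real.rpow_mul ha0.le, Real.rpow_intCast, neg_add, Real.rpow_add ha0,
    Real.rpow_neg_one, zpow_add_one₀ (by positivity)]
  field_simp
  ring

section RadialFunction

variable {E : Type*} [SeminormedAddCommGroup E]

theorem eqOn_sphere_comp_norm (f : ℝ → ℝ) (x : E) (r : ℝ) :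
    Set.EqOn (fun y => f ‖x - y‖) (fun _ => f r) (sphere x r) := by
  intro y hy
  rw [mem_sphere, dist_eq_norm, norm_sub_rev] at hy
  simp only [hy]

theorem integrableOn_sphere_comp_norm [ProperSpace E] [MeasurableSpace E] [OpensMeasurableSpace E]
    (μ : Measure E) [IsFiniteMeasureOnCompacts μ] (f : ℝ → ℝ) (x : E) (r : ℝ) :
    IntegrableOn (fun y => f ‖x - y‖) (sphere x r) μ :=
  (integrableOn_const (isCompact_sphere x r).measure_lt_top.ne).congr_fun
    (eqOn_sphere_comp_norm f x r).symm isClosed_sphere.measurableSet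

end RadialFunction

namespace Padic

variable {p : ℕ} [hp : Fact p.Prime]

theorem ball_zpow_eq_closedBall (x : ℚ_[p]) (m : ℤ) :
    ball x ((p : ℝ) ^ m) = closedBall x ((p : ℝ) ^ (m - 1)) := by
  ext y
  simp only [mem_ball, mem_closedBall, dist_eq_norm]
  exact norm_lt_pow_iff_norm_le_pow_sub_one _ _

theorem compl_closedBall_zpow_eq_iUnion_sphere (x : ℚ_[p]) (m : ℤ) :
    (closedBall x ((p : ℝ) ^ m))ᶜ = ⋃ n : ℕ, sphere x ((p : ℝ) ^ (m + 1 + n)) := by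
  have hp1 : (1 : ℝ) < p := mod_cast hp.out.one_lt
  ext y
  simp only [Set.mem_compl_iff, mem_closedBall, not_le, Set.mem_iUnion, mem_sphere, dist_eq_norm]
  constructor
  · intro hy
    have hne : y - x ≠ 0 := fun h => by
      rw [h, norm_zero] at hy
      exact hy.not_ge (by positivity)
    rw [norm_eq_zpow_neg_valuation hne] at hy ⊢
    have hm : m < -(y - x).valuation := (zpow_lt_zpow_iff_right₀ hp1).mp hy
    exact ⟨(-(y - x).valuation - m - 1).toNat, by congr 1; omega⟩
  · rintro ⟨n, hn⟩
    rw [hn]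
    exact zpow_lt_zpow_right₀ hp1 (by omega)

theorem mem_closedBall_mul_p_zpow_iff {y a : ℚ_[p]} {γ : ℤ} :
    y ∈ closedBall (a * (p : ℚ_[p]) ^ (-γ)) ((p : ℝ) ^ (γ - 1)) ↔
      ‖y * (p : ℚ_[p]) ^ γ - a‖ < 1 := by
  have hp0 : (p : ℚ_[p]) ≠ 0 := mod_cast hp.out.ne_zero
  have hpγ : (0 : ℝ) < (p : ℝ) ^ γ := zpow_pos (mod_cast hp.out.pos) γ
  have h : y - a * (p : ℚ_[p]) ^ (-γ) =
      (y * (p : ℚ_[p]) ^ γ - a) * (p : ℚ_[p]) ^ (-γ) := by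
    rw [sub_mul, mul_assoc, ← zpow_add₀ hp0, add_neg_cancel, zpow_zero, mul_one]
  rw [mem_closedBall, dist_eq_norm, ← norm_lt_pow_iff_norm_le_pow_sub_one, h, norm_mul,
    norm_p_zpow, neg_neg]
  exact mul_lt_iff_lt_one_left hpγ

theorem norm_mul_p_zpow_le_one_iff {y : ℚ_[p]} {γ : ℤ} :
    ‖y * (p : ℚ_[p]) ^ γ‖ ≤ 1 ↔ ‖y‖ ≤ (p : ℝ) ^ γ := by
  rw [norm_mul, norm_p_zpow, ← le_div_iff₀ (zpow_pos (mod_cast hp.out.pos) _), one_div,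
    ← zpow_neg, neg_neg]

theorem closedBall_zero_zpow_eq_biUnion (γ : ℤ) :
    closedBall (0 : ℚ_[p]) ((p : ℝ) ^ γ) =
      ⋃ i ∈ Finset.range p,
        closedBall ((i : ℚ_[p]) * (p : ℚ_[p]) ^ (-γ)) ((p : ℝ) ^ (γ - 1)) := by
  ext y
  rw [mem_closedBall_zero_iff, ← norm_mul_p_zpow_le_one_iff]
  simp only [Set.mem_iUnion, Finset.mem_range, mem_closedBall_mul_p_zpow_iff, exists_prop]
  constructor
  · intro hy
    obtain ⟨n, hnp, hn⟩ := PadicInt.exists_mem_range ⟨_, hy⟩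
    exact ⟨n, hnp, PadicInt.mem_nonunits.mp hn⟩
  · rintro ⟨i, -, hi⟩
    rw [← dist_eq_norm] at hi
    rw [← dist_zero_right]
    exact (IsUltrametricDist.dist_triangle_max _ (i : ℚ_[p]) _).trans
      (max_le hi.le (by simpa using IsUltrametricDist.norm_natCast_le_one ℚ_[p] i))

theorem pairwiseDisjoint_closedBall_natCast_mul_p_zpow (γ : ℤ) :
    (Finset.range p : Set ℕ).PairwiseDisjoint
      fun i => closedBall ((i : ℚ_[p]) * (p : ℚ_[p]) ^ (-γ)) ((p : ℝ) ^ (γ - 1)) := by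
  intro i hi j hj hij
  refine Set.disjoint_left.mpr fun y hyi hyj => hij ?_
  rw [mem_closedBall_mul_p_zpow_iff, ← dist_eq_norm] at hyi hyj
  have hdist : ‖(((j : ℤ) - i : ℤ) : ℚ_[p])‖ < 1 := by
    rw [Int.cast_sub, Int.cast_natCast, Int.cast_natCast, ← dist_eq_norm]
    exact (IsUltrametricDist.dist_triangle_max _ (y * (p : ℚ_[p]) ^ γ) _).trans_lt
      (max_lt (by rwa [dist_comm]) hyi)
  exact (Nat.modEq_iff_dvd.mpr (norm_intCast_lt_one_iff.mp hdist)).eq_of_lt_of_lt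
    (Finset.mem_range.mp hi) (Finset.mem_range.mp hj)

section Measure

variable [MeasurableSpace ℚ_[p]] [BorelSpace ℚ_[p]] (μ : Measure ℚ_[p]) [μ.IsAddHaarMeasure]

theorem measureReal_closedBall_zero_zpow_eq_mul (γ : ℤ) :
    μ.real (closedBall 0 ((p : ℝ) ^ γ)) =
      p * μ.real (closedBall 0 ((p : ℝ) ^ (γ - 1))) := by
  rw [closedBall_zero_zpow_eq_biUnion, measureReal_biUnion_finset
    (pairwiseDisjoint_closedBall_natCast_mul_p_zpow γ) (fun _ _ => measurableSet_closedBall)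
    (fun _ _ => measure_closedBall_lt_top.ne)]
  simp only [Measure.addHaar_real_closedBall_center μ, Finset.sum_const, Finset.card_range,
    nsmul_eq_mul]

theorem measureReal_closedBall_zpow (x : ℚ_[p]) (γ : ℤ) :
    μ.real (closedBall x ((p : ℝ) ^ γ)) = (p : ℝ) ^ γ * μ.real (closedBall 0 1) := by
  have hp0 : (p : ℝ) ≠ 0 := mod_cast hp.out.ne_zero
  rw [Measure.addHaar_real_closedBall_center]
  induction γ using Int.induction_on with
  | zero => simp
  | succ n ih =>
    rw [measureReal_closedBall_zero_zpow_eq_mul, add_sub_cancel_right, ih, zpow_add_one₀ hp0]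
    ring
  | pred n ih =>
    have h := measureReal_closedBall_zero_zpow_eq_mul μ (-n)
    rw [ih] at h
    calc μ.real (closedBall 0 ((p : ℝ) ^ (-(n : ℤ) - 1)))
        = (p : ℝ)⁻¹ * ((p : ℝ) ^ (-(n : ℤ)) * μ.real (closedBall 0 1)) := by
          rw [h, inv_mul_cancel_left₀ hp0]
      _ = _ := by rw [zpow_sub_one₀ hp0]; ring

variable {μ}

theorem measureReal_closedBall_zpow_of_normalized (hμ : μ (closedBall 0 1) = 1) (x : ℚ_[p])
    (γ : ℤ) : μ.real (closedBall x ((p : ℝ) ^ γ)) = (p : ℝ) ^ γ := by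
  rw [measureReal_closedBall_zpow, measureReal_def, hμ, ENNReal.toReal_one, mul_one]

theorem measureReal_sphere_zpow (hμ : μ (closedBall 0 1) = 1) (x : ℚ_[p]) (k : ℤ) :
    μ.real (sphere x ((p : ℝ) ^ k)) = (p : ℝ) ^ k - (p : ℝ) ^ (k - 1) := by
  rw [← closedBall_sdiff_ball, measureReal_sdiff ball_subset_closedBall measurableSet_ball
    measure_closedBall_lt_top.ne, ball_zpow_eq_closedBall,
    measureReal_closedBall_zpow_of_normalized hμ, measureReal_closedBall_zpow_of_normalized hμ]

theorem setIntegral_sphere_zpow_comp_norm (hμ : μ (closedBall 0 1) = 1) (f : ℝ → ℝ)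
    (x : ℚ_[p]) (k : ℤ) :
    ∫ y in sphere x ((p : ℝ) ^ k), f ‖x - y‖ ∂μ =
      f ((p : ℝ) ^ k) * ((p : ℝ) ^ k - (p : ℝ) ^ (k - 1)) := by
  rw [setIntegral_congr_fun isClosed_sphere.measurableSet (eqOn_sphere_comp_norm f x _),
    setIntegral_const, measureReal_sphere_zpow hμ, smul_eq_mul, mul_comm]

theorem integrableOn_compl_closedBall_zpow_comp_norm (hμ : μ (closedBall 0 1) = 1)
    {f : ℝ → ℝ} (x : ℚ_[p]) (m : ℤ)
    (hf : Summable fun n : ℕ => |f ((p : ℝ) ^ (m + 1 + n))| *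
      ((p : ℝ) ^ (m + 1 + n) - (p : ℝ) ^ (m + 1 + n - 1))) :
    IntegrableOn (fun y => f ‖x - y‖) (closedBall x ((p : ℝ) ^ m))ᶜ μ := by
  rw [compl_closedBall_zpow_eq_iUnion_sphere]
  refine integrableOn_iUnion_of_summable_integral_norm
    (fun n => integrableOn_sphere_comp_norm μ f x _) ?_
  simpa only [Real.norm_eq_abs, setIntegral_sphere_zpow_comp_norm hμ (fun t => |f t|)] using hf

theorem hasSum_setIntegral_compl_closedBall_zpow_comp_norm (hμ : μ (closedBall 0 1) = 1)
    {f : ℝ → ℝ} (x : ℚ_[p]) (m : ℤ)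
    (hf : Summable fun n : ℕ => |f ((p : ℝ) ^ (m + 1 + n))| *
      ((p : ℝ) ^ (m + 1 + n) - (p : ℝ) ^ (m + 1 + n - 1))) :
    HasSum (fun n : ℕ => f ((p : ℝ) ^ (m + 1 + n)) *
        ((p : ℝ) ^ (m + 1 + n) - (p : ℝ) ^ (m + 1 + n - 1)))
      (∫ y in (closedBall x ((p : ℝ) ^ m))ᶜ, f ‖x - y‖ ∂μ) := by
  have hp1 : (1 : ℝ) < p := mod_cast hp.out.one_lt
  have hint := integrableOn_compl_closedBall_zpow_comp_norm hμ x m hf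
  rw [compl_closedBall_zpow_eq_iUnion_sphere] at hint ⊢
  have hdisj :
      Pairwise (Function.onFun Disjoint fun n : ℕ => sphere x ((p : ℝ) ^ (m + 1 + n))) := by
    intro i j hij
    refine Set.disjoint_left.mpr fun y hi hj => hij ?_
    rw [mem_sphere] at hi hj
    have := zpow_right_injective₀ (by positivity) hp1.ne' (hi.symm.trans hj)
    omega
  simpa only [setIntegral_sphere_zpow_comp_norm hμ] using
    hasSum_integral_iUnion (fun _ => isClosed_sphere.measurableSet) hdisj hint

theorem integrableOn_and_setIntegral_compl_closedBall_rpow (hμ : μ (closedBall 0 1) = 1)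
    {α : ℝ} (hα : 0 < α) (x : ℚ_[p]) (m : ℤ) :
    IntegrableOn (fun y => ‖x - y‖ ^ (-(1 + α))) (closedBall x ((p : ℝ) ^ m))ᶜ μ ∧
      ∫ y in (closedBall x ((p : ℝ) ^ m))ᶜ, ‖x - y‖ ^ (-(1 + α)) ∂μ =
        (1 - (p : ℝ)⁻¹) * ((p : ℝ) ^ (-α)) ^ (m + 1) / (1 - (p : ℝ) ^ (-α)) := by
  have hp1 : (1 : ℝ) < p := mod_cast hp.out.one_lt
  set r := (p : ℝ) ^ (-α)
  have hr0 : 0 ≤ r := by positivity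
  have hr1 : r < 1 := Real.rpow_lt_one_of_one_lt_of_neg hp1 (neg_neg_of_pos hα)
  have hterm : ∀ n : ℕ, ((p : ℝ) ^ (m + 1 + n)) ^ (-(1 + α)) *
      ((p : ℝ) ^ (m + 1 + n) - (p : ℝ) ^ (m + 1 + n - 1)) =
        (1 - (p : ℝ)⁻¹) * r ^ (m + 1) * r ^ n := by
    intro n
    rw [zpow_rpow_neg_one_add_mul_sub (by positivity), zpow_add₀ (by positivity), zpow_natCast,
      mul_assoc]
  have hsum : HasSum (fun n : ℕ => (1 - (p : ℝ)⁻¹) * r ^ (m + 1) * r ^ n)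
      ((1 - (p : ℝ)⁻¹) * r ^ (m + 1) / (1 - r)) := by
    rw [div_eq_mul_inv]
    exact (hasSum_geometric_of_lt_one hr0 hr1).mul_left _
  have hf : Summable fun n : ℕ => |((p : ℝ) ^ (m + 1 + n)) ^ (-(1 + α))| *
      ((p : ℝ) ^ (m + 1 + n) - (p : ℝ) ^ (m + 1 + n - 1)) := by
    refine hsum.summable.congr fun n => ?_
    rw [abs_of_nonneg (Real.rpow_nonneg (by positivity) _), hterm]
  refine ⟨integrableOn_compl_closedBall_zpow_comp_norm (f := (· ^ (-(1 + α)))) hμ x m hf, ?_⟩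
  refine (hasSum_setIntegral_compl_closedBall_zpow_comp_norm (f := (· ^ (-(1 + α)))) hμ x m
    hf).unique ?_
  simp only [hterm]
  exact hsum

end Measure

end Padic

open Padic

noncomputable def vladimirovIntegrand {p : ℕ} [Fact p.Prime] (α : ℝ) (ψ : ℚ_[p] → ℂ)
    (x y : ℚ_[p]) : ℂ :=
  ((‖x - y‖ ^ (-(1 + α)) : ℝ) : ℂ) * (ψ x - ψ y)

namespace IsWavelet

variable {p : ℕ} [hp : Fact p.Prime] [MeasurableSpace ℚ_[p]] {μ : Measure ℚ_[p]}
  {ψ : ℚ_[p] → ℂ} {c : ℚ_[p]} {γ : ℤ}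

theorem eq_zero_of_notMem (hψ : IsWavelet μ ψ c γ) {y : ℚ_[p]}
    (hy : y ∉ closedBall c ((p : ℝ) ^ γ)) : ψ y = 0 :=
  hψ.1 y (not_le.mp hy)

theorem continuous (hψ : IsWavelet μ ψ c γ) : Continuous ψ := by
  refine continuous_iff_continuousAt.mpr fun x =>
    ContinuousAt.congr (f := fun _ => ψ x) continuousAt_const ?_
  filter_upwards [closedBall_mem_nhds x (zpow_pos (mod_cast hp.out.pos : (0 : ℝ) < p) (γ - 1))]
    with y hy using hψ.2.1 x y (dist_comm x y ▸ hy)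

theorem integrable [OpensMeasurableSpace ℚ_[p]] [IsFiniteMeasureOnCompacts μ]
    (hψ : IsWavelet μ ψ c γ) : Integrable ψ μ :=
  hψ.continuous.integrable_of_hasCompactSupport <|
    HasCompactSupport.intro (isCompact_closedBall c _) fun _ => hψ.eq_zero_of_notMem

variable {x : ℚ_[p]}

theorem vladimirovIntegrand_eqOn_closedBall (hψ : IsWavelet μ ψ c γ) (α : ℝ) :
    Set.EqOn (vladimirovIntegrand α ψ x)
      (fun y => ((((p : ℝ) ^ γ) ^ (-(1 + α)) : ℝ) : ℂ) * (ψ x - ψ y))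
      (closedBall x ((p : ℝ) ^ γ)) := by
  intro y hy
  rw [mem_closedBall, dist_eq_norm, norm_sub_rev] at hy
  rcases hy.lt_or_eq with hlt | heq
  · have hxy : ψ x = ψ y :=
      hψ.2.1 x y (dist_eq_norm x y ▸ (norm_lt_pow_iff_norm_le_pow_sub_one _ _).mp hlt)
    simp [vladimirovIntegrand, hxy]
  · simp [vladimirovIntegrand, heq]

theorem vladimirovIntegrand_eqOn_compl_closedBall (hψ : IsWavelet μ ψ c γ) (α : ℝ)
    (hx : x ∈ closedBall c ((p : ℝ) ^ γ)) :
    Set.EqOn (vladimirovIntegrand α ψ x)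
      (fun y => ψ x * ((‖x - y‖ ^ (-(1 + α)) : ℝ) : ℂ))
      (closedBall x ((p : ℝ) ^ γ))ᶜ := by
  intro y hy
  rw [Set.mem_compl_iff, ← IsUltrametricDist.closedBall_eq_of_mem hx] at hy
  simp [vladimirovIntegrand, hψ.eq_zero_of_notMem hy, mul_comm]

theorem vladimirovIntegrand_of_notMem (hψ : IsWavelet μ ψ c γ) (α : ℝ)
    (hx : x ∉ closedBall c ((p : ℝ) ^ γ)) :
    vladimirovIntegrand α ψ x = fun y => -((‖x - c‖ ^ (-(1 + α)) : ℝ) : ℂ) * ψ y := by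
  funext y
  rw [vladimirovIntegrand, hψ.eq_zero_of_notMem hx, zero_sub, mul_neg, ← neg_mul]
  by_cases hy : y ∈ closedBall c ((p : ℝ) ^ γ)
  · rw [mem_closedBall, dist_comm] at hy
    rw [mem_closedBall, not_le] at hx
    have hdist : dist x y = dist x c := by
      rw [IsUltrametricDist.dist_eq_max_of_dist_ne_dist x c y (hy.trans_lt hx).ne',
        max_eq_left (hy.trans hx.le)]
    rw [← dist_eq_norm, ← dist_eq_norm, hdist]
  · simp [hψ.eq_zero_of_notMem hy]

variable [BorelSpace ℚ_[p]] [μ.IsAddHaarMeasure]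

theorem integrableOn_and_setIntegral_closedBall_vladimirovIntegrand (hμ : μ (closedBall 0 1) = 1)
    (hψ : IsWavelet μ ψ c γ) (α : ℝ) (hx : x ∈ closedBall c ((p : ℝ) ^ γ)) :
    IntegrableOn (vladimirovIntegrand α ψ x) (closedBall x ((p : ℝ) ^ γ)) μ ∧
      ∫ y in closedBall x ((p : ℝ) ^ γ), vladimirovIntegrand α ψ x y ∂μ =
        ((((p : ℝ) ^ (-α)) ^ γ : ℝ) : ℂ) * ψ x := by
  have hp0 : (0 : ℝ) < p := mod_cast hp.out.pos
  have hEq := hψ.vladimirovIntegrand_eqOn_closedBall (x := x) α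
  have hconst : IntegrableOn (fun _ => ψ x) (closedBall x ((p : ℝ) ^ γ)) μ :=
    integrableOn_const measure_closedBall_lt_top.ne
  have hψB : ∫ y in closedBall x ((p : ℝ) ^ γ), ψ y ∂μ = 0 := by
    rw [setIntegral_eq_integral_of_forall_compl_eq_zero, hψ.2.2.1]
    intro y hy
    rw [← IsUltrametricDist.closedBall_eq_of_mem hx] at hy
    exact hψ.eq_zero_of_notMem hy
  refine ⟨IntegrableOn.congr_fun ((hconst.sub hψ.integrable.integrableOn).const_mul _) hEq.symm
    measurableSet_closedBall, ?_⟩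
  rw [setIntegral_congr_fun measurableSet_closedBall hEq, integral_const_mul,
    integral_sub hconst hψ.integrable.integrableOn, setIntegral_const, hψB, sub_zero,
    measureReal_closedBall_zpow_of_normalized hμ, Complex.real_smul,
    ← zpow_rpow_neg_one_add_mul_self hp0, Complex.ofReal_mul]
  ring

theorem integrableOn_and_setIntegral_compl_closedBall_vladimirovIntegrand
    (hμ : μ (closedBall 0 1) = 1) {α : ℝ} (hα : 0 < α) (hψ : IsWavelet μ ψ c γ)
    (hx : x ∈ closedBall c ((p : ℝ) ^ γ)) :
    IntegrableOn (vladimirovIntegrand α ψ x) (closedBall x ((p : ℝ) ^ γ))ᶜ μ ∧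
      ∫ y in (closedBall x ((p : ℝ) ^ γ))ᶜ, vladimirovIntegrand α ψ x y ∂μ =
        ψ x *
          (((1 - (p : ℝ)⁻¹) * ((p : ℝ) ^ (-α)) ^ (γ + 1) / (1 - (p : ℝ) ^ (-α)) : ℝ) : ℂ) := by
  obtain ⟨hint, hval⟩ := integrableOn_and_setIntegral_compl_closedBall_rpow hμ hα x γ
  have hEq := hψ.vladimirovIntegrand_eqOn_compl_closedBall α hx
  refine ⟨IntegrableOn.congr_fun (hint.ofReal.const_mul (ψ x)) hEq.symm
    measurableSet_closedBall.compl, ?_⟩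
  rw [setIntegral_congr_fun measurableSet_closedBall.compl hEq, integral_const_mul,
    integral_complex_ofReal, hval]

theorem integrable_and_integral_vladimirovIntegrand_of_mem (hμ : μ (closedBall 0 1) = 1)
    {α : ℝ} (hα : 0 < α) (hψ : IsWavelet μ ψ c γ)
    (hx : x ∈ closedBall c ((p : ℝ) ^ γ)) :
    Integrable (vladimirovIntegrand α ψ x) μ ∧
      ∫ y, vladimirovIntegrand α ψ x y ∂μ = (((p : ℝ) ^ (-(α * γ)) *
        ((1 - (p : ℝ) ^ (-(1 + α))) / (1 - (p : ℝ) ^ (-α))) : ℝ) : ℂ) * ψ x := by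
  obtain ⟨hintB, hB⟩ :=
    hψ.integrableOn_and_setIntegral_closedBall_vladimirovIntegrand hμ α hx
  obtain ⟨hintBc, hBc⟩ :=
    hψ.integrableOn_and_setIntegral_compl_closedBall_vladimirovIntegrand hμ hα hx
  have hint : Integrable (vladimirovIntegrand α ψ x) μ := by
    simpa using hintB.union hintBc
  refine ⟨hint, ?_⟩
  rw [← integral_add_compl measurableSet_closedBall hint, hB, hBc,
    ← rpow_neg_zpow_add_geometric_tail (mod_cast hp.out.one_lt) hα γ]
  push_cast
  ring

theorem integrable_and_integral_vladimirovIntegrand_of_notMem (hψ : IsWavelet μ ψ c γ)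
    (α : ℝ) (hx : x ∉ closedBall c ((p : ℝ) ^ γ)) :
    Integrable (vladimirovIntegrand α ψ x) μ ∧
      ∫ y, vladimirovIntegrand α ψ x y ∂μ = 0 := by
  rw [hψ.vladimirovIntegrand_of_notMem α hx]
  exact ⟨hψ.integrable.const_mul _, by rw [integral_const_mul, hψ.2.2.1, mul_zero]⟩

end IsWavelet

/-- the Vladimirov operator `D^α` on wavelets: for `α > 0` and a wavelet `ψ`
with ball of radius `p^γ`, `∫ |x-y|_p^(-1-α) (ψ(x) - ψ(y)) dμ(y)` converges absolutely and
equals `p^(-αγ) (1 - p^(-1-α))/(1 - p^(-α)) ψ(x)`. -/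
theorem vladimirov_eigenvalue {p : ℕ} [Fact p.Prime]
    [MeasurableSpace ℚ_[p]] [BorelSpace ℚ_[p]]
    (μ : Measure ℚ_[p]) [μ.IsAddHaarMeasure] (hμ : μ (Metric.closedBall 0 1) = 1)
    (α : ℝ) (hα : 0 < α)
    (ψ : ℚ_[p] → ℂ) (c : ℚ_[p]) (γ : ℤ) (hψ : IsWavelet μ ψ c γ) :
    ∀ x : ℚ_[p],
      Integrable (fun y => ((‖x - y‖ ^ (-(1 + α)) : ℝ) : ℂ) * (ψ x - ψ y)) μ ∧
      (∫ y, ((‖x - y‖ ^ (-(1 + α)) : ℝ) : ℂ) * (ψ x - ψ y) ∂μ) =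
        ((((p : ℝ) ^ (-(α * (γ : ℝ))) * ((1 - (p : ℝ) ^ (-(1 + α))) / (1 - (p : ℝ) ^ (-α))) : ℝ)) : ℂ) * ψ x := by
  intro x
  by_cases hx : x ∈ closedBall c ((p : ℝ) ^ γ)
  · exact hψ.integrable_and_integral_vladimirovIntegrand_of_mem hμ hα hx
  · obtain ⟨hint, hval⟩ := hψ.integrable_and_integral_vladimirovIntegrand_of_notMem α hx
    exact ⟨hint, hval.trans (by rw [hψ.eq_zero_of_notMem hx, mul_zero])⟩
end

section
/- If ψ and φ are ultrametric wavelets whose balls are distinct, then ψ and φ are orthogonal in L²(ℚ_p, μ): ∫ ψ(x) · conj(φ(x)) dμ(x) = 0. -/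
open MeasureTheory

theorem integral_mul_conj_eq_zero_of_eq_on_support {α 𝕜 : Type*} [MeasurableSpace α] [RCLike 𝕜]
    {μ : Measure α} {f g : α → 𝕜} (a : 𝕜) (hf : ∀ x, g x ≠ 0 → f x = a)
    (hg : ∫ x, g x ∂μ = 0) : ∫ x, f x * starRingEnd 𝕜 (g x) ∂μ = 0 := by
  have hfg : ∀ x, f x * starRingEnd 𝕜 (g x) = a * starRingEnd 𝕜 (g x) := fun x ↦ by
    by_cases hx : g x = 0
    · simp [hx]
    · rw [hf x hx]
  simp_rw [hfg, integral_const_mul, integral_conj, hg, map_zero, mul_zero]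

namespace IsWavelet

variable {p : ℕ} [Fact p.Prime] [MeasurableSpace ℚ_[p]] {μ : Measure ℚ_[p]} {ψ : ℚ_[p] → ℂ}
  {c : ℚ_[p]} {γ : ℤ}

theorem mem_closedBall_of_ne_zero (hψ : IsWavelet μ ψ c γ) {x : ℚ_[p]} (hx : ψ x ≠ 0) :
    x ∈ Metric.closedBall c ((p : ℝ) ^ γ) :=
  not_lt.mp fun hlt ↦ hx (hψ.1 x hlt)

theorem eq_of_mem_closedBall (hψ : IsWavelet μ ψ c γ) {c' x : ℚ_[p]} {γ' : ℤ} (hγ : γ' < γ)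
    (hx : x ∈ Metric.closedBall c' ((p : ℝ) ^ γ')) : ψ x = ψ c' :=
  hψ.2.1 x c' <| hx.trans <|
    zpow_le_zpow_right₀ (by exact_mod_cast (Fact.out : p.Prime).one_lt.le) (by omega)

end IsWavelet

theorem wavelets_orthogonal_general {p : ℕ} [Fact p.Prime]
    [MeasurableSpace ℚ_[p]]
    (μ : Measure ℚ_[p])
    (ψ φ : ℚ_[p] → ℂ) (cψ cφ : ℚ_[p]) (γψ γφ : ℤ)
    (hψ : IsWavelet μ ψ cψ γψ) (hφ : IsWavelet μ φ cφ γφ)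
    (hne : Metric.closedBall cψ ((p : ℝ) ^ γψ) ≠ Metric.closedBall cφ ((p : ℝ) ^ γφ)) :
    (∫ x, ψ x * (starRingEnd ℂ) (φ x) ∂μ) = 0 := by
  wlog hle : γφ ≤ γψ generalizing ψ φ cψ cφ γψ γφ
  · have hswap := this φ ψ cφ cψ γφ γψ hφ hψ hne.symm (by omega)
    rw [← RCLike.conj_conj (∫ x, ψ x * _ ∂μ), ← integral_conj]
    simpa [mul_comm] using hswap
  rcases hle.lt_or_eq with hlt | rfl
  · exact integral_mul_conj_eq_zero_of_eq_on_support (ψ cφ)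
      (fun x hx ↦ hψ.eq_of_mem_closedBall hlt (hφ.mem_closedBall_of_ne_zero hx)) hφ.2.2.1
  · have hprod : ∀ x, ψ x * starRingEnd ℂ (φ x) = 0 := fun x ↦ by
      by_contra hx
      obtain ⟨hψx, hφx⟩ := mul_ne_zero_iff.mp hx
      exact hne <|
        (IsUltrametricDist.closedBall_eq_of_mem (hψ.mem_closedBall_of_ne_zero hψx)).trans
          (IsUltrametricDist.closedBall_eq_of_mem
            (hφ.mem_closedBall_of_ne_zero ((map_ne_zero _).mp hφx))).symm
    simp_rw [hprod, integral_zero]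

/-- Ultrametric wavelets whose balls are distinct are orthogonal in `L²(ℚ_p, μ)`. -/
theorem wavelets_orthogonal {p : ℕ} [Fact p.Prime]
    [MeasurableSpace ℚ_[p]] [BorelSpace ℚ_[p]]
    (μ : Measure ℚ_[p]) [μ.IsAddHaarMeasure] (hμ : μ (Metric.closedBall 0 1) = 1)
    (ψ φ : ℚ_[p] → ℂ) (cψ cφ : ℚ_[p]) (γψ γφ : ℤ)
    (hψ : IsWavelet μ ψ cψ γψ) (hφ : IsWavelet μ φ cφ γφ)
    (hne : Metric.closedBall cψ ((p : ℝ) ^ γψ) ≠ Metric.closedBall cφ ((p : ℝ) ^ γφ)) :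
    (∫ x, ψ x * (starRingEnd ℂ) (φ x) ∂μ) = 0 :=
  wavelets_orthogonal_general μ ψ φ cψ cφ γψ γφ hψ hφ hne
end
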